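/- arXiv:2510.10842 — 6 statements merged into one kernel-verified Lean document; each statement's English description precedes it below -/
import Mathlib

section
/- Let k be an integer with k > |ζ|, let J_k be a resolvent map for F at level k, and let F_k be the associated Yosida approximation. Then for every t ∈ [0,T] and every x ∈ D one has ‖F_k(t,x)‖ ≤ 3·(‖F(t,x)‖ + |ζ|·‖x‖). -/
open Set

/-- Lemma 2.7 (\eqref{vy1}): for an integer `k > |ζ|`, the Yosida approximation
`F_k(t,x) = F(t, J_k(t,x))` satisfies `‖F_k(t,x)‖ ≤ 3(‖F(t,x)‖ + |ζ|‖x‖)` on `[0,T] × D`. -/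
theorem yosida_approx_norm_bound
    {V : Type*} [NormedAddCommGroup V] [NormedSpace ℝ V] [CompleteSpace V]
    [TopologicalSpace.SeparableSpace V]
    (T : ℝ) (hT : 0 < T) (D : Set V) (F : ℝ → V → V) (ζ : ℝ)
    (hdiss : ∀ t ∈ Icc (0:ℝ) T, ∀ α : ℝ, 0 < α → ∀ x ∈ D, ∀ y ∈ D,
      ‖x - y‖ ≤ ‖x - y - α • ((F t x - ζ • x) - (F t y - ζ • y))‖)
    (k : ℕ) (hk : |ζ| < (k : ℝ))
    (J : ℝ → V → V)
    (hJmem : ∀ t ∈ Icc (0:ℝ) T, ∀ x : V, J t x ∈ D)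
    (hJeq : ∀ t ∈ Icc (0:ℝ) T, ∀ x : V,
      J t x - (1 / (k : ℝ)) • (F t (J t x) - ζ • J t x) = x)
    (Fk : ℝ → V → V) (hFk : ∀ t : ℝ, ∀ x : V, Fk t x = F t (J t x)) :
    ∀ t ∈ Icc (0:ℝ) T, ∀ x ∈ D,
      ‖Fk t x‖ ≤ 3 * (‖F t x‖ + |ζ| * ‖x‖) := by
  intro t ht x hx
  have hk0 : (0:ℝ) < (k:ℝ) := lt_of_le_of_lt (abs_nonneg ζ) hk
  set y := J t x with hy
  have hymem : y ∈ D := hJmem t ht x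
  have heq : y - (1 / (k : ℝ)) • (F t y - ζ • y) = x := hJeq t ht x
  have hsub : y - x = (1 / (k : ℝ)) • (F t y - ζ • y) := by
    rw [← heq]; abel
  -- dissipativity estimate
  have hd := hdiss t ht (1 / (k:ℝ)) (by positivity) y hymem x hx
  have hrw : y - x - (1 / (k:ℝ)) • ((F t y - ζ • y) - (F t x - ζ • x))
      = (1 / (k:ℝ)) • (F t x - ζ • x) := by
    rw [hsub]; module
  rw [hrw] at hd
  have hG : ‖F t x - ζ • x‖ ≤ ‖F t x‖ + |ζ| * ‖x‖ := by
    calc ‖F t x - ζ • x‖ ≤ ‖F t x‖ + ‖ζ • x‖ := norm_sub_le _ _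
    _ = ‖F t x‖ + |ζ| * ‖x‖ := by rw [norm_smul, Real.norm_eq_abs]
  have hd' : ‖y - x‖ ≤ (1 / (k:ℝ)) * ‖F t x - ζ • x‖ := by
    calc ‖y - x‖ ≤ ‖(1 / (k:ℝ)) • (F t x - ζ • x)‖ := hd
    _ = (1 / (k:ℝ)) * ‖F t x - ζ • x‖ := by
        rw [norm_smul, Real.norm_eq_abs, abs_of_pos (by positivity)]
  -- express F t y
  have hFty : F t y = (k:ℝ) • (y - x) + ζ • y := by
    have := congrArg (fun v => (k:ℝ) • v) hsub
    simp only [smul_smul] at this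
    rw [mul_one_div_cancel (ne_of_gt hk0), one_smul] at this
    rw [this]; abel
  have hyn : ‖y‖ ≤ ‖y - x‖ + ‖x‖ := by
    calc ‖y‖ = ‖(y - x) + x‖ := by rw [sub_add_cancel]
    _ ≤ ‖y - x‖ + ‖x‖ := norm_add_le _ _
  have hbound : ‖F t y‖ ≤ (k:ℝ) * ‖y - x‖ + |ζ| * ‖y‖ := by
    rw [hFty]
    calc ‖(k:ℝ) • (y - x) + ζ • y‖ ≤ ‖(k:ℝ) • (y - x)‖ + ‖ζ • y‖ := norm_add_le _ _
    _ = (k:ℝ) * ‖y - x‖ + |ζ| * ‖y‖ := by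
        rw [norm_smul, norm_smul, Real.norm_eq_abs, Real.norm_eq_abs,
          abs_of_pos hk0]
  rw [hFk]
  have hζ0 : (0:ℝ) ≤ |ζ| := abs_nonneg ζ
  have h1 : (k:ℝ) * ‖y - x‖ ≤ ‖F t x - ζ • x‖ := by
    have := mul_le_mul_of_nonneg_left hd' (le_of_lt hk0)
    calc (k:ℝ) * ‖y - x‖ ≤ (k:ℝ) * ((1 / (k:ℝ)) * ‖F t x - ζ • x‖) := this
    _ = ‖F t x - ζ • x‖ := by field_simp
  have h2 : |ζ| * ‖y - x‖ ≤ ‖F t x - ζ • x‖ := by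
    calc |ζ| * ‖y - x‖ ≤ (k:ℝ) * ‖y - x‖ :=
      mul_le_mul_of_nonneg_right (le_of_lt hk) (norm_nonneg _)
    _ ≤ ‖F t x - ζ • x‖ := h1
  have h3 : |ζ| * ‖y‖ ≤ ‖F t x - ζ • x‖ + |ζ| * ‖x‖ := by
    calc |ζ| * ‖y‖ ≤ |ζ| * (‖y - x‖ + ‖x‖) := mul_le_mul_of_nonneg_left hyn hζ0
    _ = |ζ| * ‖y - x‖ + |ζ| * ‖x‖ := by ring
    _ ≤ ‖F t x - ζ • x‖ + |ζ| * ‖x‖ := by linarith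
  calc ‖F t y‖ ≤ (k:ℝ) * ‖y - x‖ + |ζ| * ‖y‖ := hbound
  _ ≤ 2 * ‖F t x - ζ • x‖ + |ζ| * ‖x‖ := by linarith
  _ ≤ 3 * (‖F t x‖ + |ζ| * ‖x‖) := by nlinarith [norm_nonneg x, norm_nonneg (F t x)]
end

section
/- Let k and h be integers with k > |ζ| and h > |ζ|, and let J_k and J_h be resolvent maps for F at levels k and h respectively. Then for every t ∈ [0,T] and all x, y ∈ D one has ‖J_k(t,x) − J_h(t,y)‖ ≤ ‖x − y‖ + (1/k + 1/h)·(‖F(t,x)‖ + ‖F(t,y)‖ + |ζ|·‖x‖ + |ζ|·‖y‖). -/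
open Set

/-- Lemma 2.7 (\eqref{superyE}): for integers `k, h > |ζ|` and resolvent maps `J_k, J_h`,
`‖J_k(t,x) − J_h(t,y)‖ ≤ ‖x − y‖ + (1/k + 1/h)(‖F(t,x)‖ + ‖F(t,y)‖ + |ζ|‖x‖ + |ζ|‖y‖)`
for every `t ∈ [0,T]` and `x, y ∈ D`. -/
theorem resolvent_two_levels_bound
    {V : Type*} [NormedAddCommGroup V] [NormedSpace ℝ V] [CompleteSpace V]
    [TopologicalSpace.SeparableSpace V]
    (T : ℝ) (hT : 0 < T) (D : Set V) (F : ℝ → V → V) (ζ : ℝ)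
    (hdiss : ∀ t ∈ Icc (0:ℝ) T, ∀ α : ℝ, 0 < α → ∀ x ∈ D, ∀ y ∈ D,
      ‖x - y‖ ≤ ‖x - y - α • ((F t x - ζ • x) - (F t y - ζ • y))‖)
    (k h : ℕ) (hk : |ζ| < (k : ℝ)) (hh : |ζ| < (h : ℝ))
    (Jk Jh : ℝ → V → V)
    (hJkmem : ∀ t ∈ Icc (0:ℝ) T, ∀ x : V, Jk t x ∈ D)
    (hJkeq : ∀ t ∈ Icc (0:ℝ) T, ∀ x : V,
      Jk t x - (1 / (k : ℝ)) • (F t (Jk t x) - ζ • Jk t x) = x)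
    (hJhmem : ∀ t ∈ Icc (0:ℝ) T, ∀ x : V, Jh t x ∈ D)
    (hJheq : ∀ t ∈ Icc (0:ℝ) T, ∀ x : V,
      Jh t x - (1 / (h : ℝ)) • (F t (Jh t x) - ζ • Jh t x) = x) :
    ∀ t ∈ Icc (0:ℝ) T, ∀ x ∈ D, ∀ y ∈ D,
      ‖Jk t x - Jh t y‖ ≤ ‖x - y‖ +
        (1 / (k : ℝ) + 1 / (h : ℝ)) *
          (‖F t x‖ + ‖F t y‖ + |ζ| * ‖x‖ + |ζ| * ‖y‖) := by
  intro t ht x hx y hy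
  have hk0 : (0:ℝ) < k := lt_of_le_of_lt (abs_nonneg ζ) hk
  have hh0 : (0:ℝ) < h := lt_of_le_of_lt (abs_nonneg ζ) hh
  set gk := F t (Jk t x) - ζ • Jk t x with hgk
  set gh := F t (Jh t y) - ζ • Jh t y with hgh
  have ek : Jk t x = x + (1 / (k:ℝ)) • gk :=
    sub_eq_iff_eq_add.mp (hJkeq t ht x)
  have eh : Jh t y = y + (1 / (h:ℝ)) • gh :=
    sub_eq_iff_eq_add.mp (hJheq t ht y)
  -- Step 1: dissipativity at α = 1/k between Jk t x and Jh t y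
  have h1 : ‖Jk t x - Jh t y‖ ≤ ‖x - y + ((1/(k:ℝ)) - (1/(h:ℝ))) • gh‖ := by
    have hd := hdiss t ht (1/(k:ℝ)) (by positivity) (Jk t x) (hJkmem t ht x)
      (Jh t y) (hJhmem t ht y)
    rw [← hgk, ← hgh] at hd
    have : Jk t x - Jh t y - (1/(k:ℝ)) • (gk - gh)
        = x - y + ((1/(k:ℝ)) - (1/(h:ℝ))) • gh := by
      rw [ek, eh]; module
    rwa [this] at hd
  -- Step 2: bound ‖gh‖
  have h2 : ‖Jh t y - y‖ ≤ (1/(h:ℝ)) * ‖F t y - ζ • y‖ := by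
    have hd := hdiss t ht (1/(h:ℝ)) (by positivity) (Jh t y) (hJhmem t ht y) y hy
    rw [← hgh] at hd
    have : Jh t y - y - (1/(h:ℝ)) • (gh - (F t y - ζ • y))
        = (1/(h:ℝ)) • (F t y - ζ • y) := by
      rw [eh]; module
    rw [this, norm_smul, Real.norm_eq_abs, abs_of_pos (by positivity)] at hd
    exact hd
  have hgh_eq : gh = (h:ℝ) • (Jh t y - y) := by
    rw [eh, add_sub_cancel_left, smul_smul, mul_one_div, div_self (ne_of_gt hh0), one_smul]
  have hghn : ‖gh‖ ≤ ‖F t y‖ + |ζ| * ‖y‖ := by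
    have : ‖gh‖ ≤ ‖F t y - ζ • y‖ := by
      rw [hgh_eq, norm_smul, Real.norm_eq_abs, abs_of_pos hh0]
      calc (h:ℝ) * ‖Jh t y - y‖ ≤ (h:ℝ) * ((1/(h:ℝ)) * ‖F t y - ζ • y‖) := by
            exact mul_le_mul_of_nonneg_left h2 (le_of_lt hh0)
        _ = ‖F t y - ζ • y‖ := by field_simp
    refine this.trans ?_
    calc ‖F t y - ζ • y‖ ≤ ‖F t y‖ + ‖ζ • y‖ := norm_sub_le _ _
      _ = ‖F t y‖ + |ζ| * ‖y‖ := by rw [norm_smul, Real.norm_eq_abs]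
  -- conclude
  calc ‖Jk t x - Jh t y‖ ≤ ‖x - y + ((1/(k:ℝ)) - (1/(h:ℝ))) • gh‖ := h1
    _ ≤ ‖x - y‖ + ‖((1/(k:ℝ)) - (1/(h:ℝ))) • gh‖ := norm_add_le _ _
    _ = ‖x - y‖ + |1/(k:ℝ) - 1/(h:ℝ)| * ‖gh‖ := by rw [norm_smul, Real.norm_eq_abs]
    _ ≤ ‖x - y‖ + (1 / (k : ℝ) + 1 / (h : ℝ)) *
          (‖F t x‖ + ‖F t y‖ + |ζ| * ‖x‖ + |ζ| * ‖y‖) := by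
        have h3 : |1/(k:ℝ) - 1/(h:ℝ)| ≤ 1/(k:ℝ) + 1/(h:ℝ) := by
          refine (abs_sub _ _).trans_eq ?_
          rw [abs_of_pos (by positivity : (0:ℝ) < 1/(k:ℝ)),
            abs_of_pos (by positivity : (0:ℝ) < 1/(h:ℝ))]
        have h4 : ‖F t y‖ + |ζ| * ‖y‖ ≤
            ‖F t x‖ + ‖F t y‖ + |ζ| * ‖x‖ + |ζ| * ‖y‖ := by
          have := norm_nonneg (F t x)
          have := mul_nonneg (abs_nonneg ζ) (norm_nonneg x)
          linarith
        have h5 := mul_le_mul h3 (hghn.trans h4) (norm_nonneg _) (by positivity)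
        linarith
end

section
/- Let E be a separable Banach space, T > 0, and 0 ≤ s ≤ T. Let A : [0,T] → L(E) be continuous in operator norm and assume each A(t) is dissipative, i.e. ‖x − αA(t)x‖ ≥ ‖x‖ for every α > 0 and every x ∈ E. If u : [s,T] → E is differentiable and satisfies u′(r) = A(r)u(r) for every r ∈ [s,T], then ‖u(t)‖ ≤ ‖u(s)‖ for every t ∈ [s,T]. In particular, whenever a strongly continuous evolution operator is generated by such a family A(·), it is a contraction in operator norm. -/
open Set Filter Topology

/-- If `A : [0,T] → L(E)` is norm-continuous with each `A(t)` dissipative, then any solution of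
`u′ = A(t)u` on `[s,T]` satisfies `‖u(t)‖ ≤ ‖u(s)‖`, i.e. the generated evolution operator is a
contraction. -/
theorem linear_nonautonomous_contraction
    {E : Type*} [NormedAddCommGroup E] [NormedSpace ℝ E] [CompleteSpace E]
    [TopologicalSpace.SeparableSpace E]
    (T : ℝ) (hT : 0 < T) (s : ℝ) (hs : s ∈ Icc (0:ℝ) T)
    (A : ℝ → E →L[ℝ] E) (hA : ContinuousOn A (Icc (0:ℝ) T))
    (hAdiss : ∀ t ∈ Icc (0:ℝ) T, ∀ α : ℝ, 0 < α → ∀ x : E, ‖x‖ ≤ ‖x - α • A t x‖)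
    (u : ℝ → E)
    (hu : ∀ r ∈ Icc s T, HasDerivWithinAt u (A r (u r)) (Icc s T) r) :
    ∀ t ∈ Icc s T, ‖u t‖ ≤ ‖u s‖ := by
  have hsub : Icc s T ⊆ Icc (0:ℝ) T := Icc_subset_Icc hs.1 le_rfl
  have hucont : ContinuousOn u (Icc s T) := fun r hr => (hu r hr).continuousWithinAt
  have hAu : ContinuousOn (fun r => A r (u r)) (Icc s T) :=
    ContinuousOn.clm_apply (hA.mono hsub) hucont
  -- the key right-slope estimate
  have key : ∀ x ∈ Ico s T, ∀ r : ℝ, (0:ℝ) < r →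
      ∃ᶠ z in 𝓝[>] x, slope (fun t => ‖u t‖) x z < r := by
    intro x hx r hr
    have hxI : x ∈ Icc s T := ⟨hx.1, hx.2.le⟩
    have hle : 𝓝[>] x ≤ 𝓝[Icc s T] x :=
      le_trans (nhdsWithin_le_of_mem (Ioc_mem_nhdsGT_of_mem ⟨le_rfl, hx.2⟩))
        (nhdsWithin_mono x (fun z hz => ⟨hx.1.trans hz.1.le, hz.2⟩))
    have hr3 : (0:ℝ) < r / 3 := by linarith
    -- derivative estimate
    have hderiv := (hu x hxI).isLittleO.def hr3
    -- continuity estimate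
    have hcont : ∀ᶠ z in 𝓝[Icc s T] x,
        ‖A z (u z) - A x (u x)‖ < r / 3 := by
      have := (hAu x hxI).tendsto
      have := Metric.tendsto_nhds.1 this (r / 3) hr3
      filter_upwards [this] with z hz
      simpa [dist_eq_norm] using hz
    have hmem : ∀ᶠ z in 𝓝[>] x, z ∈ Ioc x T := Ioc_mem_nhdsGT_of_mem ⟨le_rfl, hx.2⟩
    refine ((hderiv.filter_mono hle).and ((hcont.filter_mono hle).and hmem)).frequently.mono ?_
    rintro z ⟨hd, hc, hz⟩
    have hzx : 0 < z - x := sub_pos.2 hz.1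
    have hzI : z ∈ Icc (0:ℝ) T := ⟨hs.1.trans (hx.1.trans hz.1.le), hz.2⟩
    -- dissipativity at z with α = z - x
    have h1 : ‖u z‖ ≤ ‖u z - (z - x) • A z (u z)‖ := hAdiss z hzI (z - x) hzx (u z)
    have h2 : u z - (z - x) • A z (u z)
        = u x + (u z - u x - (z - x) • A x (u x)) + (z - x) • (A x (u x) - A z (u z)) := by
      simp [smul_sub]; abel
    have h3 : ‖u z - (z - x) • A z (u z)‖
        ≤ ‖u x‖ + ‖u z - u x - (z - x) • A x (u x)‖ + (z - x) * ‖A x (u x) - A z (u z)‖ := by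
      rw [h2]
      refine le_trans (norm_add_le _ _) ?_
      gcongr
      · exact norm_add_le _ _
      · rw [norm_smul, Real.norm_eq_abs, abs_of_pos hzx]
    have hd' : ‖u z - u x - (z - x) • A x (u x)‖ ≤ r / 3 * (z - x) := by
      simpa [Real.norm_eq_abs, abs_of_pos hzx] using hd
    have hc' : ‖A x (u x) - A z (u z)‖ < r / 3 := by rwa [norm_sub_rev]
    have : ‖u z‖ - ‖u x‖ ≤ r / 3 * (z - x) + (z - x) * (r / 3) := by
      have := h1.trans h3
      nlinarith [norm_nonneg (A x (u x) - A z (u z))]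
    rw [slope_def_field, div_lt_iff₀ hzx]
    nlinarith
  -- apply the fencing lemma with boundary ‖u s‖ + ε (t - s)
  have main : ∀ ε : ℝ, 0 < ε → ∀ t ∈ Icc s T, ‖u t‖ ≤ ‖u s‖ + ε * (t - s) := by
    intro ε hε t ht
    have := image_le_of_liminf_slope_right_lt_deriv_boundary'
      (f := fun t => ‖u t‖) (f' := fun _ => 0) (a := s) (b := T)
      (hucont.norm)
      (fun x hx r hr => key x hx r hr)
      (B := fun t => ‖u s‖ + ε * (t - s)) (B' := fun _ => ε)
      (by simp)
      (by fun_prop)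
      (fun x _ => by
        have : HasDerivWithinAt (fun t => ‖u s‖ + ε * (t - s)) (ε * 1) (Ici x) x := by
          exact (((hasDerivWithinAt_id x _).sub_const s).const_mul ε).const_add _
        simpa using this)
      (fun x _ _ => hε)
    exact this ht
  intro t ht
  refine le_of_forall_pos_le_add fun δ hδ => ?_
  have hts : t - s ≤ T := by
    have := ht.2; have := hs.1; linarith
  have := main (δ / T) (by positivity) t ht
  have h2 : δ / T * (t - s) ≤ δ := by
    rcases le_or_gt (t - s) 0 with h | h
    · have : δ / T * (t - s) ≤ 0 := mul_nonpos_of_nonneg_of_nonpos (by positivity) h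
      linarith
    · calc δ / T * (t - s) ≤ δ / T * T := by gcongr
        _ = δ := by field_simp
  linarith
end

section
/- Let H be a separable real Hilbert space, T > 0, s ∈ [0,T), and ζ ∈ ℝ. Let A : [0,T] → L(H) be continuous in operator norm with ⟨A(t)x, x⟩ ≤ 0 for all t ∈ [0,T] and x ∈ H. Let Φ : [0,T] × H → H be such that t ↦ Φ(t,x) is continuous for every x, Φ(t,·) is globally Lipschitz uniformly in t, and ⟨Φ(t,u) − Φ(t,v), u − v⟩ ≤ ζ‖u − v‖² for all t ∈ [0,T] and u, v ∈ H. Let f : [s,T] → H be continuous, x ∈ H, and let y : [s,T] → H be continuously differentiable with y(s) = x and y′(t) = A(t)y(t) + Φ(t, y(t) + f(t)) for all t ∈ [s,T]. Then for every t ∈ [s,T]: ‖y(t)‖ ≤ e^{ζ(t−s)}‖x‖ + ∫_s^t e^{ζ(t−r)}‖Φ(r, f(r))‖ dr. -/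
open Set
open scoped RealInnerProductSpace

/-- A priori estimate for the approximating problem: if `A(t)` is dissipative and
`Φ(t,·) − ζ·id` is dissipative, a `C¹` solution of `y′ = A(t)y + Φ(t, y + f(t))`, `y(s) = x`
satisfies `‖y(t)‖ ≤ e^{ζ(t−s)}‖x‖ + ∫_s^t e^{ζ(t−r)}‖Φ(r,f(r))‖ dr`. -/
theorem approximating_problem_apriori_estimate
    {H : Type*} [NormedAddCommGroup H] [InnerProductSpace ℝ H] [CompleteSpace H]
    [TopologicalSpace.SeparableSpace H]
    (T : ℝ) (hT : 0 < T) (s : ℝ) (hs : s ∈ Ico (0:ℝ) T) (ζ : ℝ)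
    (A : ℝ → H →L[ℝ] H) (hA : ContinuousOn A (Icc (0:ℝ) T))
    (hAdiss : ∀ t ∈ Icc (0:ℝ) T, ∀ x : H, ⟪A t x, x⟫ ≤ 0)
    (Φ : ℝ → H → H)
    (hΦc : ∀ x : H, ContinuousOn (fun t => Φ t x) (Icc (0:ℝ) T))
    (L : ℝ) (hΦL : ∀ t ∈ Icc (0:ℝ) T, ∀ u v : H, ‖Φ t u - Φ t v‖ ≤ L * ‖u - v‖)
    (hΦdiss : ∀ t ∈ Icc (0:ℝ) T, ∀ u v : H,
      ⟪Φ t u - Φ t v, u - v⟫ ≤ ζ * ‖u - v‖ ^ 2)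
    (f : ℝ → H) (hf : ContinuousOn f (Icc s T)) (x : H)
    (y : ℝ → H) (hy0 : y s = x)
    (hy : ∀ t ∈ Icc s T, HasDerivWithinAt y (A t (y t) + Φ t (y t + f t)) (Icc s T) t) :
    ∀ t ∈ Icc s T,
      ‖y t‖ ≤ Real.exp (ζ * (t - s)) * ‖x‖ +
        ∫ r in s..t, Real.exp (ζ * (t - r)) * ‖Φ r (f r)‖ := by
  obtain ⟨hs0, hsT⟩ := hs
  have hIccsub : Icc s T ⊆ Icc 0 T := Icc_subset_Icc hs0 le_rfl
  -- the clamp map onto `[s, T]`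
  set c : ℝ → ℝ := fun r => max s (min r T) with hc_def
  have hc_cont : Continuous c := continuous_const.max (continuous_id.min continuous_const)
  have hc_mem : ∀ r, c r ∈ Icc s T :=
    fun r => ⟨le_max_left _ _, max_le hsT.le (min_le_right _ _)⟩
  have hc_id : ∀ r ∈ Icc s T, c r = r := fun r hr => by
    simp [hc_def, min_eq_left hr.2, max_eq_right hr.1]
  -- continuity of `r ↦ Φ r (f r)` on `[s, T]`
  have hΦf : ContinuousOn (fun r => Φ r (f r)) (Icc s T) := by
    intro r₀ hr₀
    have h1 : ContinuousWithinAt (fun r => Φ r (f r₀)) (Icc s T) r₀ :=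
      ((hΦc (f r₀)) r₀ (hIccsub hr₀)).mono hIccsub
    have h2 : Filter.Tendsto (fun r => Φ r (f r) - Φ r (f r₀))
        (nhdsWithin r₀ (Icc s T)) (nhds 0) := by
      have hb : Filter.Tendsto (fun r => L * ‖f r - f r₀‖)
          (nhdsWithin r₀ (Icc s T)) (nhds (L * ‖f r₀ - f r₀‖)) :=
        (((hf r₀ hr₀).sub tendsto_const_nhds).norm).const_mul L
      rw [sub_self, norm_zero, mul_zero] at hb
      refine squeeze_zero_norm' ?_ hb
      filter_upwards [self_mem_nhdsWithin] with r hr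
      exact hΦL r (hIccsub hr) (f r) (f r₀)
    have h3 := h2.add h1
    rw [zero_add] at h3
    have : (fun r => Φ r (f r) - Φ r (f r₀) + Φ r (f r₀)) = fun r => Φ r (f r) := by
      funext r; abel
    rwa [this] at h3
  set g : ℝ → ℝ := fun r => ‖Φ (c r) (f (c r))‖ with hg_def
  have hg_cont : Continuous g := continuous_norm.comp (hΦf.comp_continuous hc_cont hc_mem)
  have hg_eq : ∀ r ∈ Icc s T, g r = ‖Φ r (f r)‖ := fun r hr => by
    simp only [hg_def, hc_id r hr]
  have hg0 : ∀ r, 0 ≤ g r := fun r => norm_nonneg _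
  have hexp_cont : Continuous fun r : ℝ => Real.exp (-(ζ * r)) :=
    Real.continuous_exp.comp ((continuous_const.mul continuous_id).neg)
  have hy_cont : ContinuousOn y (Icc s T) := fun t ht => (hy t ht).continuousWithinAt
  have hmem : ∀ t ∈ Ico s T, Icc s T ∈ nhdsWithin t (Ici t) := by
    intro t ht
    rw [mem_nhdsWithin]
    exact ⟨Iio T, isOpen_Iio, ht.2, fun z hz => ⟨ht.1.trans hz.2, hz.1.le⟩⟩
  -- right derivative of `‖y‖²`
  have hsq : ∀ t ∈ Ico s T,
      HasDerivWithinAt (fun τ => ‖y τ‖ ^ 2)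
        (2 * ⟪A t (y t) + Φ t (y t + f t), y t⟫) (Ici t) t := by
    intro t ht
    have h := (hy t ⟨ht.1, ht.2.le⟩).mono_of_mem_nhdsWithin (hmem t ht)
    have h2 := h.inner (𝕜 := ℝ) h
    have hfun : (fun τ => ⟪y τ, y τ⟫) = fun τ => ‖y τ‖ ^ 2 := by
      funext τ; exact real_inner_self_eq_norm_sq (y τ)
    rw [hfun] at h2
    convert h2 using 1
    case e'_4 => rfl
    case e'_5 => rfl
    rw [real_inner_comm]; ring
  -- key estimate with an ε-margin
  have key : ∀ ε : ℝ, 0 < ε → ∀ t ∈ Icc s T,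
      ‖y t‖ ≤ Real.exp (ζ * t) * (Real.exp (-(ζ * s)) * (‖x‖ + ε)
        + ∫ r in s..t, Real.exp (-(ζ * r)) * (g r + ε)) := by
    intro ε hε
    set h : ℝ → ℝ := fun r => Real.exp (-(ζ * r)) * (g r + ε) with hh_def
    have hh_cont : Continuous h :=
      hexp_cont.mul (hg_cont.add continuous_const)
    set D : ℝ → ℝ := fun τ => Real.exp (ζ * τ) *
      (Real.exp (-(ζ * s)) * (‖x‖ + ε) + ∫ r in s..τ, h r) with hD_def
    have hD : ∀ t : ℝ, HasDerivAt D (ζ * D t + (g t + ε)) t := by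
      intro t
      have hG : HasDerivAt (fun τ => ∫ r in s..τ, h r) (h t) t :=
        (hh_cont.integral_hasStrictDerivAt s t).hasDerivAt
      have hexp : HasDerivAt (fun τ => Real.exp (ζ * τ)) (Real.exp (ζ * t) * (ζ * 1)) t :=
        ((hasDerivAt_id t).const_mul ζ).exp
      have hmul := hexp.mul (hG.const_add (Real.exp (-(ζ * s)) * (‖x‖ + ε)))
      have e1 : Real.exp (ζ * t) * h t = g t + ε := by
        simp only [hh_def, ← mul_assoc, ← Real.exp_add]
        simp
      convert hmul using 1
      case e'_4 => rfl
      case e'_5 => rfl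
      case e'_8 => rfl
      rw [e1]
      simp only [hD_def]
      ring
    have hD_cont : Continuous D := continuous_iff_continuousAt.2 fun t => (hD t).continuousAt
    have hDpos : ∀ t ∈ Icc s T, 0 < D t := by
      intro t ht
      have hint : 0 ≤ ∫ r in s..t, h r := by
        apply intervalIntegral.integral_nonneg ht.1
        intro u _
        simp only [hh_def]
        exact mul_nonneg (Real.exp_pos _).le (add_nonneg (hg0 u) hε.le)
      have h1 := Real.exp_pos (ζ * t)
      have h2 := Real.exp_pos (-(ζ * s))
      have h3 := norm_nonneg x
      simp only [hD_def]
      exact mul_pos h1 (by nlinarith)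
    have main := image_le_of_liminf_slope_right_lt_deriv_boundary
      (f := fun τ => ‖y τ‖ ^ 2)
      (f' := fun τ => 2 * ⟪A τ (y τ) + Φ τ (y τ + f τ), y τ⟫)
      (a := s) (b := T)
      (B := fun τ => D τ ^ 2) (B' := fun τ => 2 * D τ * (ζ * D τ + (g τ + ε)))
      (hy_cont.norm.pow 2)
      (fun τ hτ r hr => (hsq τ hτ).liminf_right_slope_le hr)
      (by
        show ‖y s‖ ^ 2 ≤ D s ^ 2
        have hDs : D s = ‖x‖ + ε := by
          simp only [hD_def, intervalIntegral.integral_same, add_zero, ← mul_assoc,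
            ← Real.exp_add]
          simp
        rw [hy0, hDs]
        have := norm_nonneg x
        nlinarith)
      (fun τ => by
        have := (hD τ).pow 2
        convert this using 1
        case e'_4 => rfl
        case e'_5 => rfl
        case e'_8 => rfl
        push_cast
        ring)
      (by
        intro τ hτ heq
        have heq' : ‖y τ‖ ^ 2 = D τ ^ 2 := heq
        show 2 * ⟪A τ (y τ) + Φ τ (y τ + f τ), y τ⟫ < 2 * D τ * (ζ * D τ + (g τ + ε))
        have hτ' : τ ∈ Icc s T := ⟨hτ.1, hτ.2.le⟩
        have hDp := hDpos τ hτ'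
        have hny : ‖y τ‖ = D τ := by
          have h1 := Real.sqrt_sq (norm_nonneg (y τ))
          have h2 := Real.sqrt_sq hDp.le
          rw [← h1, ← h2, heq']
        have hA0 : ⟪A τ (y τ), y τ⟫ ≤ 0 := hAdiss τ (hIccsub hτ') (y τ)
        have hdis : ⟪Φ τ (y τ + f τ) - Φ τ (f τ), y τ⟫ ≤ ζ * ‖y τ‖ ^ 2 := by
          have := hΦdiss τ (hIccsub hτ') (y τ + f τ) (f τ)
          simpa [add_sub_cancel_right] using this
        have hCS : ⟪Φ τ (f τ), y τ⟫ ≤ ‖Φ τ (f τ)‖ * ‖y τ‖ := real_inner_le_norm _ _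
        have hgτ : g τ = ‖Φ τ (f τ)‖ := hg_eq τ hτ'
        rw [hny] at hdis hCS
        rw [← hgτ] at hCS
        have hsplit : ⟪A τ (y τ) + Φ τ (y τ + f τ), y τ⟫ =
            ⟪A τ (y τ), y τ⟫ + (⟪Φ τ (y τ + f τ) - Φ τ (f τ), y τ⟫ + ⟪Φ τ (f τ), y τ⟫) := by
          rw [inner_add_left, inner_sub_left]; ring
        rw [hsplit]
        nlinarith [mul_pos hDp hε])
    intro t ht
    have hle2 := main ht
    calc ‖y t‖ = Real.sqrt (‖y t‖ ^ 2) := (Real.sqrt_sq (norm_nonneg _)).symm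
      _ ≤ Real.sqrt (D t ^ 2) := Real.sqrt_le_sqrt hle2
      _ = D t := Real.sqrt_sq (hDpos t ht).le
  -- pass to the limit ε → 0
  intro t ht
  have hst : s ≤ t := ht.1
  set K : ℝ := Real.exp (ζ * t) * (Real.exp (-(ζ * s)) + ∫ r in s..t, Real.exp (-(ζ * r)))
    with hK_def
  have hKpos : 0 < K := by
    have h1 : 0 ≤ ∫ r in s..t, Real.exp (-(ζ * r)) :=
      intervalIntegral.integral_nonneg hst fun u _ => (Real.exp_pos _).le
    have h2 := Real.exp_pos (ζ * t)
    have h3 := Real.exp_pos (-(ζ * s))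
    rw [hK_def]
    nlinarith
  set C : ℝ := Real.exp (ζ * t) *
    (Real.exp (-(ζ * s)) * ‖x‖ + ∫ r in s..t, Real.exp (-(ζ * r)) * g r) with hC_def
  have hCsplit : ∀ ε : ℝ, Real.exp (ζ * t) * (Real.exp (-(ζ * s)) * (‖x‖ + ε)
      + ∫ r in s..t, Real.exp (-(ζ * r)) * (g r + ε)) = C + ε * K := by
    intro ε
    have hi1 : IntervalIntegrable (fun r => Real.exp (-(ζ * r)) * g r)
        MeasureTheory.volume s t :=
      (hexp_cont.mul hg_cont).intervalIntegrable s t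
    have hi2 : IntervalIntegrable (fun r => Real.exp (-(ζ * r)) * ε)
        MeasureTheory.volume s t :=
      (hexp_cont.mul continuous_const).intervalIntegrable s t
    have hadd : (∫ r in s..t, Real.exp (-(ζ * r)) * (g r + ε))
        = (∫ r in s..t, Real.exp (-(ζ * r)) * g r)
          + ∫ r in s..t, Real.exp (-(ζ * r)) * ε := by
      rw [← intervalIntegral.integral_add hi1 hi2]
      congr 1; funext r; ring
    rw [hadd, intervalIntegral.integral_mul_const, hC_def, hK_def]; ring
  have hle : ‖y t‖ ≤ C := by
    refine le_of_forall_pos_le_add ?_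
    intro ε hε
    have hk := key (ε / K) (div_pos hε hKpos) t ht
    rw [hCsplit] at hk
    calc ‖y t‖ ≤ C + ε / K * K := hk
      _ = C + ε := by rw [div_mul_cancel₀ _ hKpos.ne']
  have hRHS : Real.exp (ζ * (t - s)) * ‖x‖
      + (∫ r in s..t, Real.exp (ζ * (t - r)) * ‖Φ r (f r)‖) = C := by
    have h1 : (∫ r in s..t, Real.exp (ζ * (t - r)) * ‖Φ r (f r)‖)
        = ∫ r in s..t, Real.exp (ζ * t) * (Real.exp (-(ζ * r)) * g r) := by
      apply intervalIntegral.integral_congr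
      intro r hr
      rw [uIcc_of_le hst] at hr
      have hr' : r ∈ Icc s T := ⟨hr.1, hr.2.trans ht.2⟩
      show Real.exp (ζ * (t - r)) * ‖Φ r (f r)‖
        = Real.exp (ζ * t) * (Real.exp (-(ζ * r)) * g r)
      rw [hg_eq r hr', ← mul_assoc, ← Real.exp_add]
      congr 2
      ring
    have h2 : Real.exp (ζ * (t - s)) = Real.exp (ζ * t) * Real.exp (-(ζ * s)) := by
      rw [← Real.exp_add]; congr 1; ring
    rw [h1, intervalIntegral.integral_const_mul, h2, hC_def]; ring
  rw [← hRHS] at hle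
  exact hle
end

section
/- Let E be a separable Banach space, T > 0, s ∈ [0,T), and Δ_s := {(r,t) ∈ ℝ² : s ≤ r ≤ t ≤ T}. Let U and, for each n ∈ ℕ, U_n be maps from Δ_s to L(E) satisfying: U(t,t) = U_n(t,t) = I; U(t,r)U(r,ρ) = U(t,ρ) and U_n(t,r)U_n(r,ρ) = U_n(t,ρ) for s ≤ ρ ≤ r ≤ t ≤ T; ‖U(t,r)‖_{L(E)} ≤ 1 and ‖U_n(t,r)‖_{L(E)} ≤ 1; (r,t) ↦ U(t,r)z and (r,t) ↦ U_n(t,r)z continuous for every z ∈ E; and lim_{n→∞} ‖U_n(t,r) − U(t,r)‖_{L(E)} = 0 for every (r,t) ∈ Δ_s. Let Φ : [0,T] × E → E be such that t ↦ Φ(t,z) is continuous for every z and Φ(t,·) is L-Lipschitz uniformly in t; let f : [s,T] → E be continuous and x ∈ E. Let y be the unique continuous solution of y(t) = U(t,s)x + ∫_s^t U(t,r)Φ(r, y(r) + f(r)) dr and, for each n, let y_n be the unique continuous solution of y_n(t) = U_n(t,s)x + ∫_s^t U_n(t,r)Φ(r, y_n(r) + f(r)) dr. If M := sup_{n ∈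 ℕ} sup_{r ∈ [s,T]} ‖Φ(r, y_n(r) + f(r))‖ < ∞, then for every t ∈ [s,T]: lim_{n→∞} ‖y_n(t) − y(t)‖ = 0. -/
open Set Filter MeasureTheory intervalIntegral ENNReal

lemma phiCont' {E : Type*} [NormedAddCommGroup E] [NormedSpace ℝ E]
    {T s : ℝ} (h0 : 0 ≤ s)
    {Φ : ℝ → E → E} (hΦc : ∀ z : E, ContinuousOn (fun t => Φ t z) (Icc (0:ℝ) T))
    {L : ℝ} (hΦL : ∀ t ∈ Icc (0:ℝ) T, ∀ u v : E, ‖Φ t u - Φ t v‖ ≤ L * ‖u - v‖)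
    {g : ℝ → E} (hg : ContinuousOn g (Icc s T)) :
    ContinuousOn (fun r => Φ r (g r)) (Icc s T) := by
  intro r₀ hr₀
  have hsub : Icc s T ⊆ Icc (0:ℝ) T := Icc_subset_Icc h0 le_rfl
  have hg0 : ContinuousWithinAt g (Icc s T) r₀ := hg r₀ hr₀
  have hΦ0 : ContinuousWithinAt (fun t => Φ t (g r₀)) (Icc s T) r₀ :=
    ((hΦc (g r₀)).mono hsub) r₀ hr₀
  rw [ContinuousWithinAt, tendsto_iff_norm_sub_tendsto_zero]
  have h1 : Tendsto (fun r => ‖g r - g r₀‖) (nhdsWithin r₀ (Icc s T)) (nhds 0) := by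
    have := hg0; rw [ContinuousWithinAt, tendsto_iff_norm_sub_tendsto_zero] at this
    exact this
  have h2 : Tendsto (fun r => ‖Φ r (g r₀) - Φ r₀ (g r₀)‖) (nhdsWithin r₀ (Icc s T)) (nhds 0) := by
    have := hΦ0; rw [ContinuousWithinAt, tendsto_iff_norm_sub_tendsto_zero] at this
    exact this
  have hb : Tendsto (fun r => L * ‖g r - g r₀‖ + ‖Φ r (g r₀) - Φ r₀ (g r₀)‖)
      (nhdsWithin r₀ (Icc s T)) (nhds 0) := by
    simpa using (h1.const_mul L).add h2
  refine squeeze_zero' (Eventually.of_forall fun r => norm_nonneg _) ?_ hb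
  filter_upwards [self_mem_nhdsWithin] with r hr
  calc ‖Φ r (g r) - Φ r₀ (g r₀)‖
      ≤ ‖Φ r (g r) - Φ r (g r₀)‖ + ‖Φ r (g r₀) - Φ r₀ (g r₀)‖ :=
        norm_sub_le_norm_sub_add_norm_sub _ _ _
    _ ≤ L * ‖g r - g r₀‖ + ‖Φ r (g r₀) - Φ r₀ (g r₀)‖ :=
        add_le_add_left (hΦL r (hsub hr) _ _) _

lemma VphiCont' {E : Type*} [NormedAddCommGroup E] [NormedSpace ℝ E]
    {s T t : ℝ} (htT : t ≤ T)
    {V : ℝ → ℝ → E →L[ℝ] E}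
    (hVc : ∀ z : E, ContinuousOn (fun q : ℝ × ℝ => V q.2 q.1 z)
      {q : ℝ × ℝ | s ≤ q.1 ∧ q.1 ≤ q.2 ∧ q.2 ≤ T})
    (hVb : ∀ r t' : ℝ, s ≤ r → r ≤ t' → t' ≤ T → ‖V t' r‖ ≤ 1)
    {φ : ℝ → E} (hφ : ContinuousOn φ (Icc s T)) :
    ContinuousOn (fun r => V t r (φ r)) (Icc s t) := by
  intro r₀ hr₀
  have hsub : Icc s t ⊆ Icc s T := Icc_subset_Icc le_rfl htT
  have hφ0 : ContinuousWithinAt φ (Icc s t) r₀ := (hφ.mono hsub) r₀ hr₀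
  have hslice : ContinuousWithinAt (fun r => V t r (φ r₀)) (Icc s t) r₀ := by
    have hmap : MapsTo (fun r : ℝ => (r, t)) (Icc s t)
        {q : ℝ × ℝ | s ≤ q.1 ∧ q.1 ≤ q.2 ∧ q.2 ≤ T} := fun r hr => ⟨hr.1, hr.2, htT⟩
    exact ((hVc (φ r₀)).comp (continuous_id.prodMk continuous_const).continuousOn hmap) r₀ hr₀
  rw [ContinuousWithinAt, tendsto_iff_norm_sub_tendsto_zero]
  have h1 : Tendsto (fun r => ‖φ r - φ r₀‖) (nhdsWithin r₀ (Icc s t)) (nhds 0) := by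
    have := hφ0; rw [ContinuousWithinAt, tendsto_iff_norm_sub_tendsto_zero] at this
    exact this
  have h2 : Tendsto (fun r => ‖V t r (φ r₀) - V t r₀ (φ r₀)‖) (nhdsWithin r₀ (Icc s t)) (nhds 0) := by
    have := hslice; rw [ContinuousWithinAt, tendsto_iff_norm_sub_tendsto_zero] at this
    exact this
  have hb : Tendsto (fun r => ‖φ r - φ r₀‖ + ‖V t r (φ r₀) - V t r₀ (φ r₀)‖)
      (nhdsWithin r₀ (Icc s t)) (nhds 0) := by simpa using h1.add h2
  refine squeeze_zero' (Eventually.of_forall fun r => norm_nonneg _) ?_ hb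
  filter_upwards [self_mem_nhdsWithin] with r hr
  calc ‖V t r (φ r) - V t r₀ (φ r₀)‖
      ≤ ‖V t r (φ r) - V t r (φ r₀)‖ + ‖V t r (φ r₀) - V t r₀ (φ r₀)‖ :=
        norm_sub_le_norm_sub_add_norm_sub _ _ _
    _ ≤ ‖φ r - φ r₀‖ + ‖V t r (φ r₀) - V t r₀ (φ r₀)‖ := by
        refine add_le_add_left ?_ _
        rw [← map_sub]
        exact ((V t r).le_opNorm _).trans
          (mul_le_of_le_one_left (norm_nonneg _) (hVb r t hr.1 hr.2 htT))
lemma limsup_add_le_of_tendsto_zero' {e v : ℕ → ℝ≥0∞} {D : ℝ≥0∞}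
    (he : Tendsto e atTop (nhds 0)) (hv : limsup v atTop ≤ D) :
    limsup (fun n => e n + v n) atTop ≤ D := by
  refine ENNReal.le_of_forall_pos_le_add fun ε hε hD => ?_
  have hε2 : (0:ℝ≥0∞) < (ε:ℝ≥0∞)/2 := by
    simp [ENNReal.div_pos_iff, hε.ne']
  have hv' : ∀ᶠ n in atTop, v n < D + (ε:ℝ≥0∞)/2 :=
    eventually_lt_of_limsup_lt (lt_of_le_of_lt hv (ENNReal.lt_add_right hD.ne hε2.ne'))
  have he' : ∀ᶠ n in atTop, e n ≤ (ε:ℝ≥0∞)/2 :=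
    (ENNReal.tendsto_nhds_zero.1 he) _ hε2
  refine limsup_le_of_le (by isBoundedDefault) ?_
  filter_upwards [hv', he'] with n h1 h2
  calc e n + v n ≤ (ε:ℝ≥0∞)/2 + (D + (ε:ℝ≥0∞)/2) := add_le_add h2 h1.le
    _ = D + ((ε:ℝ≥0∞)/2 + (ε:ℝ≥0∞)/2) := by ring
    _ = D + ε := by rw [ENNReal.add_halves]

/-- Convergence of the mild solutions of the approximating problems: if the evolution operators
`U_n` converge in operator norm to `U` pointwise on `Δ_s`, and the nonlinear terms along the
approximating solutions are uniformly bounded, then `y_n(t) → y(t)` for every `t ∈ [s,T]`. -/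
theorem mild_solution_approximation_convergence
    {E : Type*} [NormedAddCommGroup E] [NormedSpace ℝ E] [CompleteSpace E]
    [TopologicalSpace.SeparableSpace E]
    (T : ℝ) (hT : 0 < T) (s : ℝ) (hs : s ∈ Ico (0:ℝ) T)
    (U : ℝ → ℝ → E →L[ℝ] E) (Un : ℕ → ℝ → ℝ → E →L[ℝ] E)
    (hU_id : ∀ t ∈ Icc s T, U t t = ContinuousLinearMap.id ℝ E)
    (hUn_id : ∀ n : ℕ, ∀ t ∈ Icc s T, Un n t t = ContinuousLinearMap.id ℝ E)
    (hU_comp : ∀ ρ r t : ℝ, s ≤ ρ → ρ ≤ r → r ≤ t → t ≤ T →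
      (U t r).comp (U r ρ) = U t ρ)
    (hUn_comp : ∀ n : ℕ, ∀ ρ r t : ℝ, s ≤ ρ → ρ ≤ r → r ≤ t → t ≤ T →
      (Un n t r).comp (Un n r ρ) = Un n t ρ)
    (hU_contr : ∀ r t : ℝ, s ≤ r → r ≤ t → t ≤ T → ‖U t r‖ ≤ 1)
    (hUn_contr : ∀ n : ℕ, ∀ r t : ℝ, s ≤ r → r ≤ t → t ≤ T → ‖Un n t r‖ ≤ 1)
    (hU_cont : ∀ z : E,
      ContinuousOn (fun q : ℝ × ℝ => U q.2 q.1 z)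
        {q : ℝ × ℝ | s ≤ q.1 ∧ q.1 ≤ q.2 ∧ q.2 ≤ T})
    (hUn_cont : ∀ n : ℕ, ∀ z : E,
      ContinuousOn (fun q : ℝ × ℝ => Un n q.2 q.1 z)
        {q : ℝ × ℝ | s ≤ q.1 ∧ q.1 ≤ q.2 ∧ q.2 ≤ T})
    (hUn_lim : ∀ r t : ℝ, s ≤ r → r ≤ t → t ≤ T →
      Tendsto (fun n : ℕ => ‖Un n t r - U t r‖) atTop (nhds 0))
    (Φ : ℝ → E → E)
    (hΦc : ∀ z : E, ContinuousOn (fun t => Φ t z) (Icc (0:ℝ) T))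
    (L : ℝ) (hL : 0 ≤ L)
    (hΦL : ∀ t ∈ Icc (0:ℝ) T, ∀ u v : E, ‖Φ t u - Φ t v‖ ≤ L * ‖u - v‖)
    (f : ℝ → E) (hf : ContinuousOn f (Icc s T)) (x : E)
    (y : ℝ → E) (yn : ℕ → ℝ → E)
    (hy_cont : ContinuousOn y (Icc s T))
    (hy : ∀ t ∈ Icc s T, y t = U t s x + ∫ r in s..t, U t r (Φ r (y r + f r)))
    (hyn_cont : ∀ n : ℕ, ContinuousOn (yn n) (Icc s T))
    (hyn : ∀ n : ℕ, ∀ t ∈ Icc s T,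
      yn n t = Un n t s x + ∫ r in s..t, Un n t r (Φ r (yn n r + f r)))
    (M : ℝ) (hM : ∀ n : ℕ, ∀ r ∈ Icc s T, ‖Φ r (yn n r + f r)‖ ≤ M) :
    ∀ t ∈ Icc s T, Tendsto (fun n : ℕ => ‖yn n t - y t‖) atTop (nhds 0) := by
  intro t ht
  obtain ⟨hs0, hsTlt⟩ := hs
  have hsT : s ≤ T := hsTlt.le
  have hst : s ≤ t := ht.1
  have htT : t ≤ T := ht.2
  -- the nonlinear terms along the solutions
  set φy : ℝ → E := fun r => Φ r (y r + f r) with hφy_def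
  set φn : ℕ → ℝ → E := fun n r => Φ r (yn n r + f r) with hφn_def
  have hφy_cont : ContinuousOn φy (Icc s T) := phiCont' hs0 hΦc hΦL (hy_cont.add hf)
  have hφn_cont : ∀ n, ContinuousOn (φn n) (Icc s T) := fun n =>
    phiCont' hs0 hΦc hΦL ((hyn_cont n).add hf)
  obtain ⟨M', hM'⟩ : ∃ M', ∀ r ∈ Icc s T, ‖φy r‖ ≤ M' :=
    isCompact_Icc.exists_bound_of_continuousOn hφy_cont
  have hM0 : 0 ≤ M := le_trans (norm_nonneg _) (hM 0 s ⟨le_refl s, hsT⟩)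
  have hM'0 : 0 ≤ M' := le_trans (norm_nonneg _) (hM' s ⟨le_refl s, hsT⟩)
  set C : ℝ := 2 * ‖x‖ + (M + M') * (T - s) with hC_def
  have hC0 : 0 ≤ C := by
    have h1 : (0:ℝ) ≤ T - s := by linarith
    positivity
  -- continuity of integrands
  have hUφy_cont : ∀ t' ∈ Icc s T, ContinuousOn (fun r => U t' r (φy r)) (Icc s t') :=
    fun t' ht' => VphiCont' ht'.2 hU_cont hU_contr hφy_cont
  have hUφn_cont : ∀ n, ∀ t' ∈ Icc s T, ContinuousOn (fun r => U t' r (φn n r)) (Icc s t') :=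
    fun n t' ht' => VphiCont' ht'.2 hU_cont hU_contr (hφn_cont n)
  have hUnφn_cont : ∀ n, ∀ t' ∈ Icc s T,
      ContinuousOn (fun r => Un n t' r (φn n r)) (Icc s t') :=
    fun n t' ht' => VphiCont' ht'.2 (hUn_cont n) (hUn_contr n) (hφn_cont n)
  -- uniform bound
  have hyn_bound : ∀ n, ∀ t' ∈ Icc s T, ‖yn n t'‖ ≤ ‖x‖ + M * (T - s) := by
    intro n t' ht'
    rw [hyn n t' ht']
    refine (norm_add_le _ _).trans (add_le_add ?_ ?_)
    · exact ((Un n t' s).le_opNorm x).trans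
        (mul_le_of_le_one_left (norm_nonneg x) (hUn_contr n s t' le_rfl ht'.1 ht'.2))
    · have : ‖∫ r in s..t', Un n t' r (φn n r)‖ ≤ M * |t' - s| := by
        refine intervalIntegral.norm_integral_le_of_norm_le_const ?_
        intro r hr
        rw [Set.uIoc_of_le ht'.1] at hr
        exact ((Un n t' r).le_opNorm _).trans
          (mul_le_mul (hUn_contr n r t' hr.1.le hr.2 ht'.2)
            (hM n r ⟨hr.1.le, hr.2.trans ht'.2⟩) (norm_nonneg _) zero_le_one) |>.trans
          (by rw [one_mul])
      refine this.trans ?_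
      rw [abs_of_nonneg (by linarith [ht'.1] : (0:ℝ) ≤ t' - s)]
      have := ht'.2
      nlinarith
  have hy_bound : ∀ t' ∈ Icc s T, ‖y t'‖ ≤ ‖x‖ + M' * (T - s) := by
    intro t' ht'
    rw [hy t' ht']
    refine (norm_add_le _ _).trans (add_le_add ?_ ?_)
    · exact ((U t' s).le_opNorm x).trans
        (mul_le_of_le_one_left (norm_nonneg x) (hU_contr s t' le_rfl ht'.1 ht'.2))
    · have : ‖∫ r in s..t', U t' r (φy r)‖ ≤ M' * |t' - s| := by
        refine intervalIntegral.norm_integral_le_of_norm_le_const ?_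
        intro r hr
        rw [Set.uIoc_of_le ht'.1] at hr
        exact ((U t' r).le_opNorm _).trans
          (mul_le_mul (hU_contr r t' hr.1.le hr.2 ht'.2)
            (hM' r ⟨hr.1.le, hr.2.trans ht'.2⟩) (norm_nonneg _) zero_le_one) |>.trans
          (by rw [one_mul])
      refine this.trans ?_
      rw [abs_of_nonneg (by linarith [ht'.1] : (0:ℝ) ≤ t' - s)]
      have := ht'.2
      nlinarith
  have hbound : ∀ n, ∀ t' ∈ Icc s T, ‖yn n t' - y t'‖ ≤ C := by
    intro n t' ht'
    refine (norm_sub_le _ _).trans ?_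
    have h1 := hyn_bound n t' ht'
    have h2 := hy_bound t' ht'
    rw [hC_def]; nlinarith
  -- interval integrability shortcuts
  have hiUnφn : ∀ n, ∀ t' ∈ Icc s T,
      IntervalIntegrable (fun r => Un n t' r (φn n r)) volume s t' :=
    fun n t' ht' => (hUnφn_cont n t' ht').intervalIntegrable_of_Icc ht'.1
  have hiUφn : ∀ n, ∀ t' ∈ Icc s T,
      IntervalIntegrable (fun r => U t' r (φn n r)) volume s t' :=
    fun n t' ht' => (hUφn_cont n t' ht').intervalIntegrable_of_Icc ht'.1
  have hiUφy : ∀ t' ∈ Icc s T,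
      IntervalIntegrable (fun r => U t' r (φy r)) volume s t' :=
    fun t' ht' => (hUφy_cont t' ht').intervalIntegrable_of_Icc ht'.1
  have hg_cont : ∀ n, ContinuousOn (fun r => ‖yn n r - y r‖) (Icc s T) :=
    fun n => ((hyn_cont n).sub hy_cont).norm
  have hig : ∀ n, ∀ t' ∈ Icc s T,
      IntervalIntegrable (fun r => ‖yn n r - y r‖) volume s t' :=
    fun n t' ht' => (((hg_cont n).mono (Icc_subset_Icc le_rfl ht'.2)).intervalIntegrable_of_Icc ht'.1)
  -- the error term
  set en : ℕ → ℝ → ℝ := fun n t' => ‖Un n t' s x - U t' s x‖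
    + ∫ r in s..t', ‖Un n t' r (φn n r) - U t' r (φn n r)‖ with hen_def
  have hen_nonneg : ∀ n, ∀ t' ∈ Icc s T, 0 ≤ en n t' := by
    intro n t' ht'
    exact add_nonneg (norm_nonneg _)
      (intervalIntegral.integral_nonneg ht'.1 fun r _ => norm_nonneg _)
  -- the key Gronwall-type inequality
  have key : ∀ n, ∀ t' ∈ Icc s T,
      ‖yn n t' - y t'‖ ≤ en n t' + L * ∫ r in s..t', ‖yn n r - y r‖ := by
    intro n t' ht'
    simp only [hen_def]
    have hsub' : Icc s t' ⊆ Icc s T := Icc_subset_Icc le_rfl ht'.2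
    have e1 : yn n t' - y t' = (Un n t' s x - U t' s x)
        + ((∫ r in s..t', Un n t' r (φn n r)) - ∫ r in s..t', U t' r (φy r)) := by
      rw [hyn n t' ht', hy t' ht']; abel
    have e2 : (∫ r in s..t', Un n t' r (φn n r)) - ∫ r in s..t', U t' r (φy r)
        = (∫ r in s..t', (Un n t' r (φn n r) - U t' r (φn n r)))
          + ∫ r in s..t', (U t' r (φn n r) - U t' r (φy r)) := by
      rw [← intervalIntegral.integral_add ((hiUnφn n t' ht').sub (hiUφn n t' ht'))
        ((hiUφn n t' ht').sub (hiUφy t' ht')),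
        ← intervalIntegral.integral_sub (hiUnφn n t' ht') (hiUφy t' ht')]
      congr 1; funext r; abel
    have h3 : ‖∫ r in s..t', (U t' r (φn n r) - U t' r (φy r))‖
        ≤ L * ∫ r in s..t', ‖yn n r - y r‖ := by
      refine (intervalIntegral.norm_integral_le_integral_norm ht'.1).trans ?_
      rw [← intervalIntegral.integral_const_mul]
      refine intervalIntegral.integral_mono_on ht'.1
        (((hUφn_cont n t' ht').sub (hUφy_cont t' ht')).norm.intervalIntegrable_of_Icc ht'.1)
        (((hig n t' ht').const_mul L)) ?_
      intro r hr
      have hr' : r ∈ Icc s T := hsub' hr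
      have hr0T : r ∈ Icc (0:ℝ) T := ⟨hs0.trans hr.1, hr'.2⟩
      rw [← map_sub]
      refine ((U t' r).le_opNorm _).trans ?_
      refine (mul_le_of_le_one_left (norm_nonneg _) (hU_contr r t' hr.1 hr.2 ht'.2)).trans ?_
      have : φn n r - φy r = Φ r (yn n r + f r) - Φ r (y r + f r) := rfl
      rw [this]
      refine (hΦL r hr0T _ _).trans ?_
      rw [add_sub_add_right_eq_sub]
    have h4 : ‖∫ r in s..t', (Un n t' r (φn n r) - U t' r (φn n r))‖
        ≤ ∫ r in s..t', ‖Un n t' r (φn n r) - U t' r (φn n r)‖ :=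
      intervalIntegral.norm_integral_le_integral_norm ht'.1
    calc ‖yn n t' - y t'‖
        ≤ ‖Un n t' s x - U t' s x‖
          + ‖(∫ r in s..t', Un n t' r (φn n r)) - ∫ r in s..t', U t' r (φy r)‖ := by
          rw [e1]; exact norm_add_le _ _
      _ ≤ ‖Un n t' s x - U t' s x‖
          + ((∫ r in s..t', ‖Un n t' r (φn n r) - U t' r (φn n r)‖)
             + L * ∫ r in s..t', ‖yn n r - y r‖) := by
          rw [e2]
          exact add_le_add_right ((norm_add_le _ _).trans (add_le_add h4 h3)) _
      _ = _ := by ring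
  -- the error terms tend to zero pointwise
  have hen_lim : ∀ t' ∈ Icc s T, Tendsto (fun n => en n t') atTop (nhds 0) := by
    intro t' ht'
    have ha : Tendsto (fun n => ‖Un n t' s x - U t' s x‖) atTop (nhds 0) := by
      have hb : Tendsto (fun n => ‖Un n t' s - U t' s‖ * ‖x‖) atTop (nhds 0) := by
        simpa using (hUn_lim s t' le_rfl ht'.1 ht'.2).mul_const ‖x‖
      refine squeeze_zero (fun n => norm_nonneg _) (fun n => ?_) hb
      have : Un n t' s x - U t' s x = (Un n t' s - U t' s) x := by
        simp [ContinuousLinearMap.sub_apply]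
      rw [this]
      exact (Un n t' s - U t' s).le_opNorm x
    have hbint : Tendsto
        (fun n => ∫ r in s..t', ‖Un n t' r (φn n r) - U t' r (φn n r)‖) atTop (nhds 0) := by
      have heq : ∀ n, (∫ r in s..t', ‖Un n t' r (φn n r) - U t' r (φn n r)‖)
          = ∫ r in Ioc s t', ‖Un n t' r (φn n r) - U t' r (φn n r)‖ :=
        fun n => intervalIntegral.integral_of_le ht'.1
      simp only [heq]
      have h0 : (0:ℝ) = ∫ r in Ioc s t', (0:ℝ) := by simp
      rw [h0]
      refine tendsto_integral_of_dominated_convergence (fun _ => 2 * M) ?_ ?_ ?_ ?_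
      · intro n
        refine ContinuousOn.aestronglyMeasurable ?_ measurableSet_Ioc
        exact (((hUnφn_cont n t' ht').sub (hUφn_cont n t' ht')).norm).mono Ioc_subset_Icc_self
      · exact integrableOn_const measure_Ioc_lt_top.ne
      · intro n
        refine (ae_restrict_iff' measurableSet_Ioc).2 (ae_of_all _ fun r hr => ?_)
        have hrT : r ∈ Icc s T := ⟨hr.1.le, hr.2.trans ht'.2⟩
        rw [Real.norm_eq_abs, abs_of_nonneg (norm_nonneg _)]
        refine (norm_sub_le _ _).trans ?_
        have h1 : ‖Un n t' r (φn n r)‖ ≤ M :=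
          ((Un n t' r).le_opNorm _).trans <| by
            have := mul_le_mul (hUn_contr n r t' hr.1.le hr.2 ht'.2)
              (hM n r hrT) (norm_nonneg _) zero_le_one
            simpa using this
        have h2 : ‖U t' r (φn n r)‖ ≤ M :=
          ((U t' r).le_opNorm _).trans <| by
            have := mul_le_mul (hU_contr r t' hr.1.le hr.2 ht'.2)
              (hM n r hrT) (norm_nonneg _) zero_le_one
            simpa using this
        show ‖(Un n t' r) (φn n r)‖ + ‖(U t' r) (φn n r)‖ ≤ 2 * M
        linarith
      · refine (ae_restrict_iff' measurableSet_Ioc).2 (ae_of_all _ fun r hr => ?_)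
        have hrT : r ∈ Icc s T := ⟨hr.1.le, hr.2.trans ht'.2⟩
        have hb : Tendsto (fun n => ‖Un n t' r - U t' r‖ * M) atTop (nhds 0) := by
          simpa using (hUn_lim r t' hr.1.le hr.2 ht'.2).mul_const M
        refine squeeze_zero (fun n => norm_nonneg _) (fun n => ?_) hb
        have : Un n t' r (φn n r) - U t' r (φn n r) = (Un n t' r - U t' r) (φn n r) := by
          simp [ContinuousLinearMap.sub_apply]
        rw [this]
        exact ((Un n t' r - U t' r).le_opNorm _).trans
          (mul_le_mul le_rfl (hM n r hrT) (norm_nonneg _) (norm_nonneg _))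
    simpa using ha.add hbint
  -- globally defined continuous versions of the differences
  set c : ℝ → ℝ := fun r => max s (min r T) with hc_def
  have hc : Continuous c := continuous_const.max (continuous_id.min continuous_const)
  have hc_mem : ∀ r, c r ∈ Icc s T := fun r =>
    ⟨le_max_left _ _, max_le hsT (le_trans (min_le_right r T) le_rfl)⟩
  have hc_id : ∀ r ∈ Icc s T, c r = r := fun r hr => by
    rw [hc_def]; simp only []; rw [min_eq_left hr.2, max_eq_right hr.1]
  set gg : ℕ → ℝ → ℝ := fun n r => ‖yn n (c r) - y (c r)‖ with hgg_def
  have hgg_cont : ∀ n, Continuous (gg n) := fun n =>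
    (((hyn_cont n).comp_continuous hc hc_mem).sub (hy_cont.comp_continuous hc hc_mem)).norm
  have hgg_eq : ∀ n, ∀ r ∈ Icc s T, gg n r = ‖yn n r - y r‖ := by
    intro n r hr
    rw [hgg_def]; simp only []; rw [hc_id r hr]
  have hgg_bound : ∀ n r, gg n r ≤ C := fun n r => hbound n (c r) (hc_mem r)
  set G : ℝ → ℝ≥0∞ := fun r => limsup (fun n => ENNReal.ofReal (gg n r)) atTop with hG_def
  have hGbound : ∀ r, G r ≤ ENNReal.ofReal C :=
    fun r => limsup_le_of_le (by isBoundedDefault)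
      (Eventually.of_forall fun n => ENNReal.ofReal_le_ofReal (hgg_bound n r))
  -- Gronwall-type inequality for G
  have hGkey : ∀ t' ∈ Icc s T, G t' ≤ ENNReal.ofReal L * ∫⁻ r in Ioc s t', G r := by
    intro t' ht'
    have higg : ∀ n, IntegrableOn (gg n) (Ioc s t') volume :=
      fun n => (hgg_cont n).integrableOn_Ioc
    have hstep : ∀ n, ENNReal.ofReal (gg n t')
        ≤ ENNReal.ofReal (en n t')
          + ENNReal.ofReal L * ∫⁻ r in Ioc s t', ENNReal.ofReal (gg n r) := by
      intro n
      have h1 : gg n t' ≤ en n t' + L * ∫ r in Ioc s t', gg n r := by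
        rw [hgg_eq n t' ht']
        refine (key n t' ht').trans ?_
        have : (∫ r in s..t', ‖yn n r - y r‖) = ∫ r in Ioc s t', gg n r := by
          rw [intervalIntegral.integral_of_le ht'.1]
          refine setIntegral_congr_fun measurableSet_Ioc fun r hr => ?_
          exact (hgg_eq n r ⟨hr.1.le, hr.2.trans ht'.2⟩).symm
        rw [this]
      refine (ENNReal.ofReal_le_ofReal h1).trans ?_
      refine (ENNReal.ofReal_add_le).trans ?_
      refine add_le_add_right ?_ _
      rw [ENNReal.ofReal_mul hL]
      refine mul_le_mul_right ?_ _
      rw [ofReal_integral_eq_lintegral_ofReal (higg n) (ae_of_all _ fun r => norm_nonneg _)]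
    have hlimsupInt : limsup (fun n => ∫⁻ r in Ioc s t', ENNReal.ofReal (gg n r)) atTop
        ≤ ∫⁻ r in Ioc s t', G r := by
      refine limsup_lintegral_le (f := fun n r => ENNReal.ofReal (gg n r))
        (fun _ => ENNReal.ofReal C)
        (fun n => ENNReal.measurable_ofReal.comp (hgg_cont n).measurable)
        (fun n => ae_of_all _ fun r => ENNReal.ofReal_le_ofReal (hgg_bound n r)) ?_
      rw [lintegral_const, Measure.restrict_apply_univ]
      exact ENNReal.mul_ne_top ENNReal.ofReal_ne_top measure_Ioc_lt_top.ne
    calc G t' ≤ limsup (fun n => ENNReal.ofReal (en n t')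
          + ENNReal.ofReal L * ∫⁻ r in Ioc s t', ENNReal.ofReal (gg n r)) atTop :=
        limsup_le_limsup (Eventually.of_forall hstep)
      _ ≤ ENNReal.ofReal L * ∫⁻ r in Ioc s t', G r := by
        refine limsup_add_le_of_tendsto_zero' ?_ ?_
        · simpa using ENNReal.tendsto_ofReal (hen_lim t' ht')
        · rw [ENNReal.limsup_const_mul_of_ne_top ENNReal.ofReal_ne_top]
          exact mul_le_mul_right hlimsupInt _
  -- iterate the inequality
  have hiter : ∀ k : ℕ, ∀ t' ∈ Icc s T,
      G t' ≤ ENNReal.ofReal (C * (L * (t' - s))^k / (Nat.factorial k)) := by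
    intro k
    induction k with
    | zero =>
      intro t' ht'
      simpa using hGbound t'
    | succ k ih =>
      intro t' ht'
      have hmono : (∫⁻ r in Ioc s t', G r)
          ≤ ∫⁻ r in Ioc s t', ENNReal.ofReal (C * (L * (r - s))^k / (Nat.factorial k)) := by
        refine lintegral_mono_ae ((ae_restrict_iff' measurableSet_Ioc).2 (ae_of_all _ ?_))
        intro r hr
        exact ih r ⟨hr.1.le, hr.2.trans ht'.2⟩
      have hint : IntegrableOn (fun r => C * (L * (r - s))^k / (Nat.factorial k))
          (Ioc s t') volume := by
        apply Continuous.integrableOn_Ioc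
        fun_prop
      have hofr : (∫⁻ r in Ioc s t', ENNReal.ofReal (C * (L * (r - s))^k / (Nat.factorial k)))
          = ENNReal.ofReal (∫ r in Ioc s t', C * (L * (r - s))^k / (Nat.factorial k)) := by
        rw [ofReal_integral_eq_lintegral_ofReal hint
          ((ae_restrict_iff' measurableSet_Ioc).2 (ae_of_all _ fun r hr => ?_))]
        have h1 : (0:ℝ) ≤ r - s := sub_nonneg.2 hr.1.le
        positivity
      have hcompute : L * ∫ r in Ioc s t', C * (L * (r - s))^k / (Nat.factorial k)
          = C * (L * (t' - s))^(k+1) / (Nat.factorial (k+1)) := by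
        rw [← intervalIntegral.integral_of_le ht'.1]
        have e : ∀ r : ℝ, C * (L * (r - s))^k / (Nat.factorial k)
            = (C * L^k / (Nat.factorial k)) * (r - s)^k := fun r => by
          rw [mul_pow]; ring
        simp_rw [e]
        rw [intervalIntegral.integral_const_mul,
          intervalIntegral.integral_comp_sub_right (fun u => u^k) s]
        simp only [sub_self, integral_pow, ne_eq, zero_pow, sub_zero]
        have hfact : ((Nat.factorial (k+1) : ℝ)) = (k+1) * (Nat.factorial k) := by
          exact_mod_cast Nat.factorial_succ k
        have hk0 : ((Nat.factorial k : ℝ)) ≠ 0 :=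
          Nat.cast_ne_zero.2 (Nat.factorial_ne_zero k)
        rw [mul_pow, hfact]
        field_simp
        ring
      calc G t' ≤ ENNReal.ofReal L * ∫⁻ r in Ioc s t', G r := hGkey t' ht'
        _ ≤ ENNReal.ofReal L
            * ∫⁻ r in Ioc s t', ENNReal.ofReal (C * (L * (r - s))^k / (Nat.factorial k)) :=
          mul_le_mul_right hmono _
        _ = ENNReal.ofReal (L * ∫ r in Ioc s t', C * (L * (r - s))^k / (Nat.factorial k)) := by
          rw [hofr, ← ENNReal.ofReal_mul hL]
        _ = ENNReal.ofReal (C * (L * (t' - s))^(k+1) / (Nat.factorial (k+1))) := by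
          rw [hcompute]
  -- conclude G t = 0
  have hG0 : G t = 0 := by
    refine le_antisymm ?_ zero_le
    have hreal : Tendsto (fun k : ℕ => C * (L * (t - s))^k / (Nat.factorial k)) atTop (nhds 0) := by
      have := (FloorSemiring.tendsto_pow_div_factorial_atTop (K := ℝ) (L * (t - s))).const_mul C
      simpa [mul_div_assoc] using this
    have htend : Tendsto (fun k : ℕ => ENNReal.ofReal (C * (L * (t - s))^k / (Nat.factorial k)))
        atTop (nhds 0) := by
      simpa using ENNReal.tendsto_ofReal hreal
    exact ge_of_tendsto htend (Eventually.of_forall fun k => hiter k t ht)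
  have htend0 : Tendsto (fun n => ENNReal.ofReal (gg n t)) atTop (nhds 0) :=
    tendsto_of_le_liminf_of_limsup_le zero_le (le_of_eq hG0)
  have h2 : Tendsto (fun n => (ENNReal.ofReal (gg n t)).toReal) atTop (nhds 0) := by
    simpa [Function.comp_def] using (ENNReal.tendsto_toReal (by simp : (0:ℝ≥0∞) ≠ ⊤)).comp htend0
  refine h2.congr fun n => ?_
  rw [ENNReal.toReal_ofReal (norm_nonneg _)]
  show ‖yn n (c t) - y (c t)‖ = ‖yn n t - y t‖
  rw [hc_id t ht]
end

section
/- Let d ≥ 1 and m ≥ 1 be integers, T > 0, and let O ⊆ ℝ^d be a bounded open set. For k = 0, …, 2m+1 let C_k : [0,T] × cl(O) → ℝ be continuous and bounded, and define b(t,ξ,s) := −C_{2m+1}(t,ξ)·s^{2m+1} + Σ_{k=0}^{2m} C_k(t,ξ)·s^k. Then there exists a constant K > 0, depending only on m and on the Lebesgue measure of O, such that for every t ∈ [0,T] and all y₁, y₂, z ∈ L^{2(2m+1)}(O): |∫_O (b(t,ξ,y₁(ξ)) − b(t,ξ,y₂(ξ)))·z(ξ) dξ| ≤ K·(Σ_{k=1}^{2m+1}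 sup_{[0,T]×cl(O)} |C_k|)·‖y₁ − y₂‖_{L²(O)}·‖z‖_{L^{2(2m+1)}(O)}·Σ_{k=1}^{2m+1}(‖y₁‖_{L^{2(2m+1)}(O)}^{k−1} + ‖y₂‖_{L^{2(2m+1)}(O)}^{k−1}). In particular, if a sequence {y_n} is bounded in L^{2(2m+1)}(O) and converges to y in L²(O), then ∫_O (b(t,ξ,y_n(ξ)) − b(t,ξ,y(ξ)))·z(ξ) dξ → 0 for every z ∈ L^{2(2m+1)}(O). -/
open MeasureTheory Set Filter
open scoped ENNReal

/-- The polynomial reaction term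
`b(t,ξ,s) = −C_{2m+1}(t,ξ) s^{2m+1} + Σ_{k=0}^{2m} C_k(t,ξ) s^k`. -/
def polyReaction (d m : ℕ) (C : ℕ → ℝ → EuclideanSpace ℝ (Fin d) → ℝ)
    (t : ℝ) (ξ : EuclideanSpace ℝ (Fin d)) (s : ℝ) : ℝ :=
  -C (2 * m + 1) t ξ * s ^ (2 * m + 1) + ∑ k ∈ Finset.range (2 * m + 1), C k t ξ * s ^ k

lemma myaux_prod_le (m : ℕ) (a b : ℝ) {i j : ℕ} (hij : i + j ≤ 2 * m) :
    |a| ^ i * |b| ^ j ≤ 1 + |a| ^ (2 * m) + |b| ^ (2 * m) := by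
  set c := max |a| |b| with hc
  have hc0 : 0 ≤ c := le_max_of_le_left (abs_nonneg a)
  have h1 : |a| ^ i * |b| ^ j ≤ c ^ (i + j) := by
    rw [pow_add]
    exact mul_le_mul (pow_le_pow_left₀ (abs_nonneg a) (le_max_left _ _) i)
      (pow_le_pow_left₀ (abs_nonneg b) (le_max_right _ _) j) (by positivity) (by positivity)
  rcases le_total c 1 with h | h
  · have : c ^ (i + j) ≤ 1 := pow_le_one₀ hc0 h
    nlinarith [pow_nonneg (abs_nonneg a) (2*m), pow_nonneg (abs_nonneg b) (2*m)]
  · have h2 : c ^ (i + j) ≤ c ^ (2 * m) := pow_le_pow_right₀ h hij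
    have h3 : c ^ (2 * m) ≤ |a| ^ (2 * m) + |b| ^ (2 * m) := by
      rcases max_cases |a| |b| with ⟨hh, _⟩ | ⟨hh, _⟩ <;> rw [hc, hh] <;>
        nlinarith [pow_nonneg (abs_nonneg a) (2*m), pow_nonneg (abs_nonneg b) (2*m)]
    linarith

lemma myaux_pow_diff (m n : ℕ) (hn : n ≤ 2 * m + 1) (a b : ℝ) :
    |a ^ n - b ^ n| ≤ (n : ℝ) * (|a - b| * (1 + |a| ^ (2 * m) + |b| ^ (2 * m))) := by
  have h := geom_sum₂_mul a b n
  calc |a ^ n - b ^ n| = |∑ i ∈ Finset.range n, a ^ i * b ^ (n - 1 - i)| * |a - b| := by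
        rw [← abs_mul, h]
    _ ≤ ((n : ℝ) * (1 + |a| ^ (2 * m) + |b| ^ (2 * m))) * |a - b| := by
        refine mul_le_mul_of_nonneg_right ?_ (abs_nonneg _)
        calc |∑ i ∈ Finset.range n, a ^ i * b ^ (n - 1 - i)|
            ≤ ∑ i ∈ Finset.range n, |a ^ i * b ^ (n - 1 - i)| :=
              Finset.abs_sum_le_sum_abs _ _
          _ ≤ ∑ _i ∈ Finset.range n, (1 + |a| ^ (2 * m) + |b| ^ (2 * m)) := by
              refine Finset.sum_le_sum fun i hi => ?_
              rw [abs_mul, abs_pow, abs_pow]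
              refine myaux_prod_le m a b ?_
              have hi' : i < n := Finset.mem_range.1 hi
              omega
          _ = (n : ℝ) * (1 + |a| ^ (2 * m) + |b| ^ (2 * m)) := by
              rw [Finset.sum_const, Finset.card_range, nsmul_eq_mul]
    _ = (n : ℝ) * (|a - b| * (1 + |a| ^ (2 * m) + |b| ^ (2 * m))) := by ring

lemma myaux_poly_diff (d m : ℕ) (C : ℕ → ℝ → EuclideanSpace ℝ (Fin d) → ℝ)
    (t : ℝ) (ξ : EuclideanSpace ℝ (Fin d)) (Mk : ℕ → ℝ)
    (hMk0 : ∀ k, 0 ≤ Mk k) (hC : ∀ k ≤ 2 * m + 1, |C k t ξ| ≤ Mk k) (a b : ℝ) :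
    |polyReaction d m C t ξ a - polyReaction d m C t ξ b| ≤
      ((2 * m + 1 : ℕ) : ℝ) * (∑ k ∈ Finset.Icc 1 (2 * m + 1), Mk k) *
        (|a - b| * (1 + |a| ^ (2 * m) + |b| ^ (2 * m))) := by
  set D : ℝ := |a - b| * (1 + |a| ^ (2 * m) + |b| ^ (2 * m)) with hD
  have hD0 : 0 ≤ D := by positivity
  have expand : polyReaction d m C t ξ a - polyReaction d m C t ξ b
      = -(C (2 * m + 1) t ξ * (a ^ (2 * m + 1) - b ^ (2 * m + 1)))
        + ∑ k ∈ Finset.range (2 * m + 1), C k t ξ * (a ^ k - b ^ k) := by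
    simp only [polyReaction, mul_sub, Finset.sum_sub_distrib]
    ring
  have step1 : |polyReaction d m C t ξ a - polyReaction d m C t ξ b| ≤
      Mk (2 * m + 1) * (((2 * m + 1 : ℕ) : ℝ) * D)
        + ∑ k ∈ Finset.range (2 * m + 1), Mk k * ((k : ℝ) * D) := by
    rw [expand]
    refine (abs_add_le _ _).trans (add_le_add ?_ ?_)
    · rw [abs_neg, abs_mul]
      exact mul_le_mul (hC _ le_rfl) (myaux_pow_diff m _ le_rfl a b) (abs_nonneg _) (hMk0 _)
    · refine (Finset.abs_sum_le_sum_abs _ _).trans (Finset.sum_le_sum fun k hk => ?_)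
      rw [abs_mul]
      exact mul_le_mul (hC k (by have := Finset.mem_range.1 hk; omega))
        (myaux_pow_diff m k (by have := Finset.mem_range.1 hk; omega) a b)
        (abs_nonneg _) (hMk0 _)
  have h1 : ∑ k ∈ Finset.range (2 * m + 1), Mk k * ((k : ℝ) * D) ≤
      ∑ i ∈ Finset.range (2 * m), ((2 * m + 1 : ℕ) : ℝ) * Mk (i + 1) * D := by
    rw [Finset.sum_range_succ']
    have h0 : Mk 0 * (((0 : ℕ) : ℝ) * D) = 0 := by simp
    rw [h0, add_zero]
    refine Finset.sum_le_sum fun i hi => ?_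
    have hcast : ((i + 1 : ℕ) : ℝ) ≤ ((2 * m + 1 : ℕ) : ℝ) :=
      Nat.cast_le.2 (by have := Finset.mem_range.1 hi; omega)
    nlinarith [hMk0 (i + 1), hD0, mul_nonneg (hMk0 (i + 1)) hD0]
  have h2 : ∑ k ∈ Finset.Icc 1 (2 * m + 1), Mk k
      = ∑ i ∈ Finset.range (2 * m), Mk (i + 1) + Mk (2 * m + 1) := by
    rw [← Finset.Ico_add_one_right_eq_Icc, Finset.sum_Ico_eq_sum_range]
    have hrange : 2 * m + 1 + 1 - 1 = 2 * m + 1 := by omega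
    rw [hrange, Finset.sum_range_succ]
    congr 1
    · exact Finset.sum_congr rfl fun i _ => by rw [Nat.add_comm]
    · rw [Nat.add_comm]
  have h3 : ∑ i ∈ Finset.range (2 * m), ((2 * m + 1 : ℕ) : ℝ) * Mk (i + 1) * D
      = ((2 * m + 1 : ℕ) : ℝ) * (∑ i ∈ Finset.range (2 * m), Mk (i + 1)) * D := by
    rw [Finset.mul_sum, Finset.sum_mul]
  calc |polyReaction d m C t ξ a - polyReaction d m C t ξ b|
      ≤ Mk (2 * m + 1) * (((2 * m + 1 : ℕ) : ℝ) * D)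
        + ∑ i ∈ Finset.range (2 * m), ((2 * m + 1 : ℕ) : ℝ) * Mk (i + 1) * D :=
        step1.trans (add_le_add_right h1 _)
    _ = ((2 * m + 1 : ℕ) : ℝ) * (∑ k ∈ Finset.Icc 1 (2 * m + 1), Mk k) * D := by
        rw [h3, h2]; ring

-- the core estimate, abstracted
theorem key_estimate
    (d m : ℕ) (hm : 1 ≤ m)
    (O : Set (EuclideanSpace ℝ (Fin d))) (hOopen : IsOpen O)
    (hObdd : Bornology.IsBounded O)
    (poly : ℝ → EuclideanSpace ℝ (Fin d) → ℝ → ℝ)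
    (Mk : ℕ → ℝ) (hMk0 : ∀ k, 0 ≤ Mk k) (t : ℝ)
    (hpoly : ∀ ξ ∈ O, ∀ a b : ℝ, |poly t ξ a - poly t ξ b| ≤
      ((2 * m + 1 : ℕ) : ℝ) * (∑ k ∈ Finset.Icc 1 (2 * m + 1), Mk k) *
        (|a - b| * (1 + |a| ^ (2 * m) + |b| ^ (2 * m))))
    (y₁ y₂ z : EuclideanSpace ℝ (Fin d) → ℝ)
    (hy₁ : MemLp y₁ ((2 * (2 * m + 1) : ℕ) : ℝ≥0∞) (volume.restrict O))
    (hy₂ : MemLp y₂ ((2 * (2 * m + 1) : ℕ) : ℝ≥0∞) (volume.restrict O))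
    (hz : MemLp z ((2 * (2 * m + 1) : ℕ) : ℝ≥0∞) (volume.restrict O)) :
    |∫ ξ in O, (poly t ξ (y₁ ξ) - poly t ξ (y₂ ξ)) * z ξ| ≤
      ((2 * m + 1 : ℕ) : ℝ) *
        (((volume.restrict O) Set.univ ^
            (1/(2:ℝ≥0∞).toReal - 1/(((2 * (2 * m + 1) : ℕ) : ℝ≥0∞)).toReal)).toReal + 1) *
        (∑ k ∈ Finset.Icc 1 (2 * m + 1), Mk k) *
        (eLpNorm (fun ξ => y₁ ξ - y₂ ξ) 2 (volume.restrict O)).toReal *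
        (eLpNorm z ((2 * (2 * m + 1) : ℕ) : ℝ≥0∞) (volume.restrict O)).toReal *
        ∑ k ∈ Finset.Icc 1 (2 * m + 1),
          ((eLpNorm y₁ ((2 * (2 * m + 1) : ℕ) : ℝ≥0∞) (volume.restrict O)).toReal ^ (k - 1) +
           (eLpNorm y₂ ((2 * (2 * m + 1) : ℕ) : ℝ≥0∞) (volume.restrict O)).toReal ^ (k - 1)) := by
  classical
  set μ := volume.restrict O with hμdef
  haveI hμfin : IsFiniteMeasure μ := ⟨by
    rw [hμdef, Measure.restrict_apply_univ]; exact hObdd.measure_lt_top⟩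
  set P : ℝ≥0∞ := ((2 * (2 * m + 1) : ℕ) : ℝ≥0∞) with hP
  have hPtop : P ≠ ∞ := ENNReal.natCast_ne_top _
  have hP2 : (2:ℝ≥0∞) ≤ P := by
    rw [hP]; exact_mod_cast Nat.cast_le.2 (by omega : 2 ≤ 2*(2*m+1))
  set M : ℝ := ∑ k ∈ Finset.Icc 1 (2 * m + 1), Mk k with hM
  have hM0 : 0 ≤ M := Finset.sum_nonneg fun k _ => hMk0 k
  set c : ℝ := ((2 * m + 1 : ℕ) : ℝ) * M with hc
  have hc0 : 0 ≤ c := mul_nonneg (Nat.cast_nonneg _) hM0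
  set cC : ℝ≥0∞ := μ Set.univ ^ (1/(2:ℝ≥0∞).toReal - 1/P.toReal) with hcC
  have hexp0 : 0 ≤ 1/(2:ℝ≥0∞).toReal - 1/P.toReal := by
    have hPt : (2:ℝ) ≤ P.toReal := by
      rw [hP, ENNReal.toReal_natCast]
      exact_mod_cast Nat.cast_le.2 (by omega : 2 ≤ 2*(2*m+1))
    have h1 : 1/P.toReal ≤ 1/(2:ℝ) := one_div_le_one_div_of_le two_pos hPt
    simp only [ENNReal.toReal_ofNat]
    linarith
  have hcCtop : cC ≠ ∞ := ENNReal.rpow_ne_top_of_nonneg hexp0 (measure_ne_top _ _)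
  set c0 : ℝ := cC.toReal with hc0def
  have hc00 : 0 ≤ c0 := ENNReal.toReal_nonneg
  -- ℒp memberships
  have hy₁2 : MemLp y₁ 2 μ := hy₁.mono_exponent hP2
  have hy₂2 : MemLp y₂ 2 μ := hy₂.mono_exponent hP2
  have hΔ : MemLp (fun ξ => y₁ ξ - y₂ ξ) 2 μ := hy₁2.sub hy₂2
  -- functions
  set G₁ : EuclideanSpace ℝ (Fin d) → ℝ := fun ξ => ‖y₁ ξ‖ ^ (2*m) * ‖z ξ‖ with hG₁
  set G₂ : EuclideanSpace ℝ (Fin d) → ℝ := fun ξ => ‖y₂ ξ‖ ^ (2*m) * ‖z ξ‖ with hG₂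
  set W : EuclideanSpace ℝ (Fin d) → ℝ := fun ξ => ‖z ξ‖ + G₁ ξ + G₂ ξ with hW
  set H : EuclideanSpace ℝ (Fin d) → ℝ := fun ξ => ‖y₁ ξ - y₂ ξ‖ * W ξ with hH
  set f : EuclideanSpace ℝ (Fin d) → ℝ :=
    fun ξ => (poly t ξ (y₁ ξ) - poly t ξ (y₂ ξ)) * z ξ with hf
  -- measurability
  have hzm : AEStronglyMeasurable z μ := hz.1
  have hy₁m : AEStronglyMeasurable y₁ μ := hy₁.1
  have hy₂m : AEStronglyMeasurable y₂ μ := hy₂.1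
  have hG₁m : AEStronglyMeasurable G₁ μ :=
    (((continuous_pow (2*m)).comp continuous_norm).comp_aestronglyMeasurable hy₁m).mul hzm.norm
  have hG₂m : AEStronglyMeasurable G₂ μ :=
    (((continuous_pow (2*m)).comp continuous_norm).comp_aestronglyMeasurable hy₂m).mul hzm.norm
  have hWm : AEStronglyMeasurable W μ := (hzm.norm.add hG₁m).add hG₂m
  have hΔm : AEStronglyMeasurable (fun ξ => y₁ ξ - y₂ ξ) μ := hΔ.1
  -- Step A
  have stepA : |∫ ξ in O, f ξ| ≤ (eLpNorm f 1 μ).toReal := by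
    rw [eLpNorm_one_eq_lintegral_enorm]
    have h := norm_integral_le_lintegral_norm (μ := μ) f
    rw [Real.norm_eq_abs] at h
    refine h.trans (le_of_eq ?_)
    congr 1
    exact lintegral_congr fun ξ => (ofReal_norm _)
  -- Step B: pointwise domination
  have stepB : eLpNorm f 1 μ ≤ eLpNorm (fun ξ => c * H ξ) 1 μ := by
    refine eLpNorm_mono_ae ?_
    rw [hμdef]
    filter_upwards [ae_restrict_mem hOopen.measurableSet] with ξ hξ
    have hb := hpoly ξ hξ (y₁ ξ) (y₂ ξ)
    calc ‖f ξ‖ = |poly t ξ (y₁ ξ) - poly t ξ (y₂ ξ)| * |z ξ| := by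
          rw [hf, Real.norm_eq_abs, abs_mul]
      _ ≤ (c * (|y₁ ξ - y₂ ξ| * (1 + |y₁ ξ| ^ (2*m) + |y₂ ξ| ^ (2*m)))) * |z ξ| :=
          mul_le_mul_of_nonneg_right hb (abs_nonneg _)
      _ = c * H ξ := by
          simp only [hH, hW, hG₁, hG₂, Real.norm_eq_abs]; ring
      _ ≤ ‖c * H ξ‖ := le_abs_self _
  -- Step C: pull out the constant
  have stepC : eLpNorm (fun ξ => c * H ξ) 1 μ = ENNReal.ofReal c * eLpNorm H 1 μ := by
    have h1 : (fun ξ => c * H ξ) = c • H := rfl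
    rw [h1, eLpNorm_const_smul]
    have h2 : ‖c‖ₑ = ENNReal.ofReal c := by
      rw [Real.enorm_eq_ofReal hc0]
    rw [h2]
  -- Hölder exponent identities
  have h11 : (1:ℝ≥0∞)/1 = 1/2 + 1/2 := by
    rw [ENNReal.div_add_div_same, one_add_one_eq_two,
      ENNReal.div_self (by simp) ENNReal.ofNat_ne_top, one_div_one]
  -- Step D: Hölder at the top level
  have stepD : eLpNorm H 1 μ ≤ eLpNorm (fun ξ => y₁ ξ - y₂ ξ) 2 μ * eLpNorm W 2 μ := by
    have h := eLpNorm_smul_le_mul_eLpNorm (μ := μ) (f := W)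
      (φ := fun ξ => ‖y₁ ξ - y₂ ξ‖) hWm hΔm.norm
        (hpqr := ⟨by simpa only [one_div] using h11.symm⟩)
    have hsm : (fun ξ => ‖y₁ ξ - y₂ ξ‖) • W = H := rfl
    rw [hsm] at h
    refine h.trans (le_of_eq ?_)
    congr 1
    exact eLpNorm_norm _
  -- Step E: triangle inequality for W
  have stepE : eLpNorm W 2 μ ≤ eLpNorm z 2 μ + eLpNorm G₁ 2 μ + eLpNorm G₂ 2 μ := by
    have e1 : W = ((fun ξ => ‖z ξ‖) + G₁) + G₂ := rfl
    calc eLpNorm W 2 μ ≤ eLpNorm ((fun ξ => ‖z ξ‖) + G₁) 2 μ + eLpNorm G₂ 2 μ := by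
          rw [e1]; exact eLpNorm_add_le (hzm.norm.add hG₁m) hG₂m one_le_two
      _ ≤ (eLpNorm (fun ξ => ‖z ξ‖) 2 μ + eLpNorm G₁ 2 μ) + eLpNorm G₂ 2 μ :=
          add_le_add_left (eLpNorm_add_le hzm.norm hG₁m one_le_two) _
      _ = eLpNorm z 2 μ + eLpNorm G₁ 2 μ + eLpNorm G₂ 2 μ := by rw [eLpNorm_norm]
  have hz2le : eLpNorm z 2 μ ≤ eLpNorm z P μ * cC :=
    eLpNorm_le_eLpNorm_mul_rpow_measure_univ (μ := μ) hP2 hzm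
  -- second Hölder
  set q₀ : ℝ≥0∞ := ((2*m+1 : ℕ) : ℝ≥0∞) / ((m:ℕ) : ℝ≥0∞) with hq₀def
  have hm0 : ((m:ℕ) : ℝ≥0∞) ≠ 0 := Nat.cast_ne_zero.2 (by omega)
  have hmtop : ((m:ℕ) : ℝ≥0∞) ≠ ∞ := ENNReal.natCast_ne_top _
  have h10 : ((2*m+1 : ℕ) : ℝ≥0∞) ≠ 0 := Nat.cast_ne_zero.2 (by omega)
  have h1top : ((2*m+1 : ℕ) : ℝ≥0∞) ≠ ∞ := ENNReal.natCast_ne_top _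
  have hq₀ : (1:ℝ≥0∞)/2 = 1/q₀ + 1/P := by
    rw [hq₀def, hP, one_div (((2*m+1 : ℕ) : ℝ≥0∞) / ((m:ℕ) : ℝ≥0∞)),
      ENNReal.inv_div (Or.inl hmtop) (Or.inl hm0)]
    have eP : ((2*(2*m+1) : ℕ) : ℝ≥0∞) = 2 * ((2*m+1 : ℕ) : ℝ≥0∞) := by push_cast; ring
    have e1 : ((m:ℕ) : ℝ≥0∞)/((2*m+1 : ℕ) : ℝ≥0∞)
        = (2*((m:ℕ):ℝ≥0∞))/(2*((2*m+1 : ℕ) : ℝ≥0∞)) :=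
      (ENNReal.mul_div_mul_left _ _ (by simp) ENNReal.ofNat_ne_top).symm
    rw [eP, e1, ENNReal.div_add_div_same]
    have h3 : (2*((m:ℕ):ℝ≥0∞)+1) = ((2*m+1 : ℕ) : ℝ≥0∞) := by push_cast; ring
    rw [h3]
    calc (1:ℝ≥0∞)/2 = (((2*m+1:ℕ):ℝ≥0∞) * 1) / (((2*m+1:ℕ):ℝ≥0∞) * 2) :=
          (ENNReal.mul_div_mul_left 1 2 h10 h1top).symm
      _ = ((2*m+1:ℕ):ℝ≥0∞) / (2 * ((2*m+1:ℕ):ℝ≥0∞)) := by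
          rw [mul_one, mul_comm 2 ((2*m+1:ℕ):ℝ≥0∞)]
  have hq₀P : q₀ * ENNReal.ofReal ((2*m : ℕ) : ℝ) = P := by
    rw [hq₀def, hP, ENNReal.ofReal_natCast]
    have e2 : ((2*m : ℕ) : ℝ≥0∞) = ((m:ℕ):ℝ≥0∞) * 2 := by push_cast; ring
    rw [e2, ← mul_assoc, ENNReal.div_mul_cancel hm0 hmtop]
    push_cast; ring
  have hrpos : (0:ℝ) < ((2*m : ℕ) : ℝ) := by exact_mod_cast (by omega : 0 < 2*m)
  have hφ₁m : AEStronglyMeasurable (fun ξ => ‖y₁ ξ‖ ^ (2*m)) μ :=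
    ((continuous_pow (2*m)).comp continuous_norm).comp_aestronglyMeasurable hy₁m
  have hφ₂m : AEStronglyMeasurable (fun ξ => ‖y₂ ξ‖ ^ (2*m)) μ :=
    ((continuous_pow (2*m)).comp continuous_norm).comp_aestronglyMeasurable hy₂m
  have hF₁ : eLpNorm G₁ 2 μ ≤ (eLpNorm y₁ P μ) ^ (((2*m : ℕ) : ℝ)) * eLpNorm z P μ := by
    have h := eLpNorm_smul_le_mul_eLpNorm (μ := μ) (f := fun ξ => ‖z ξ‖)
      (φ := fun ξ => ‖y₁ ξ‖ ^ (2*m)) hzm.norm hφ₁m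
        (hpqr := ⟨by simpa only [one_div] using hq₀.symm⟩)
    have hsm : (fun ξ => ‖y₁ ξ‖ ^ (2*m)) • (fun ξ => ‖z ξ‖) = G₁ := rfl
    rw [hsm, eLpNorm_norm] at h
    refine h.trans (mul_le_mul_left (le_of_eq ?_) _)
    have hpow : (fun ξ => ‖y₁ ξ‖ ^ (2*m)) = fun ξ => ‖y₁ ξ‖ ^ (((2*m : ℕ) : ℝ)) := by
      funext ξ; rw [Real.rpow_natCast]
    rw [hpow, eLpNorm_norm_rpow y₁ hrpos, hq₀P]
  have hF₂ : eLpNorm G₂ 2 μ ≤ (eLpNorm y₂ P μ) ^ (((2*m : ℕ) : ℝ)) * eLpNorm z P μ := by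
    have h := eLpNorm_smul_le_mul_eLpNorm (μ := μ) (f := fun ξ => ‖z ξ‖)
      (φ := fun ξ => ‖y₂ ξ‖ ^ (2*m)) hzm.norm hφ₂m
        (hpqr := ⟨by simpa only [one_div] using hq₀.symm⟩)
    have hsm : (fun ξ => ‖y₂ ξ‖ ^ (2*m)) • (fun ξ => ‖z ξ‖) = G₂ := rfl
    rw [hsm, eLpNorm_norm] at h
    refine h.trans (mul_le_mul_left (le_of_eq ?_) _)
    have hpow : (fun ξ => ‖y₂ ξ‖ ^ (2*m)) = fun ξ => ‖y₂ ξ‖ ^ (((2*m : ℕ) : ℝ)) := by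
      funext ξ; rw [Real.rpow_natCast]
    rw [hpow, eLpNorm_norm_rpow y₂ hrpos, hq₀P]
  -- assemble in ℝ≥0∞
  set N2Δ : ℝ≥0∞ := eLpNorm (fun ξ => y₁ ξ - y₂ ξ) 2 μ with hN2Δ
  set NPz : ℝ≥0∞ := eLpNorm z P μ with hNPz
  set NP1 : ℝ≥0∞ := eLpNorm y₁ P μ with hNP1
  set NP2 : ℝ≥0∞ := eLpNorm y₂ P μ with hNP2
  have big : eLpNorm f 1 μ ≤ ENNReal.ofReal c *
      (N2Δ * ((NPz * cC + NP1 ^ (((2*m : ℕ) : ℝ)) * NPz + NP2 ^ (((2*m : ℕ) : ℝ)) * NPz))) := by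
    refine stepB.trans ?_
    rw [stepC]
    refine mul_le_mul_right (stepD.trans ?_) _
    refine mul_le_mul_right (stepE.trans ?_) _
    exact add_le_add (add_le_add hz2le hF₁) hF₂
  -- finiteness
  have hN2Δtop : N2Δ ≠ ∞ := hΔ.eLpNorm_ne_top
  have hNPztop : NPz ≠ ∞ := hz.eLpNorm_ne_top
  have hNP1top : NP1 ≠ ∞ := hy₁.eLpNorm_ne_top
  have hNP2top : NP2 ≠ ∞ := hy₂.eLpNorm_ne_top
  have hNP1rtop : NP1 ^ (((2*m : ℕ) : ℝ)) ≠ ∞ :=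
    ENNReal.rpow_ne_top_of_nonneg hrpos.le hNP1top
  have hNP2rtop : NP2 ^ (((2*m : ℕ) : ℝ)) ≠ ∞ :=
    ENNReal.rpow_ne_top_of_nonneg hrpos.le hNP2top
  have hRHStop : ENNReal.ofReal c *
      (N2Δ * ((NPz * cC + NP1 ^ (((2*m : ℕ) : ℝ)) * NPz + NP2 ^ (((2*m : ℕ) : ℝ)) * NPz))) ≠ ∞ :=
    ENNReal.mul_ne_top ENNReal.ofReal_ne_top (ENNReal.mul_ne_top hN2Δtop
      (ENNReal.add_ne_top.2 ⟨ENNReal.add_ne_top.2 ⟨ENNReal.mul_ne_top hNPztop hcCtop,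
        ENNReal.mul_ne_top hNP1rtop hNPztop⟩, ENNReal.mul_ne_top hNP2rtop hNPztop⟩))
  -- pass to reals
  have treal : |∫ ξ in O, f ξ| ≤ c * (N2Δ.toReal *
      (NPz.toReal * c0 + NP1.toReal ^ (2*m) * NPz.toReal + NP2.toReal ^ (2*m) * NPz.toReal)) := by
    refine stepA.trans ((ENNReal.toReal_mono hRHStop big).trans (le_of_eq ?_))
    rw [ENNReal.toReal_mul, ENNReal.toReal_ofReal hc0, ENNReal.toReal_mul,
      ENNReal.toReal_add (ENNReal.add_ne_top.2 ⟨ENNReal.mul_ne_top hNPztop hcCtop,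
        ENNReal.mul_ne_top hNP1rtop hNPztop⟩) (ENNReal.mul_ne_top hNP2rtop hNPztop),
      ENNReal.toReal_add (ENNReal.mul_ne_top hNPztop hcCtop)
        (ENNReal.mul_ne_top hNP1rtop hNPztop),
      ENNReal.toReal_mul, ENNReal.toReal_mul, ENNReal.toReal_mul]
    have e₁ : (NP1 ^ (((2*m : ℕ) : ℝ))).toReal = NP1.toReal ^ (2*m) := by
      rw [← ENNReal.toReal_rpow, Real.rpow_natCast]
    have e₂ : (NP2 ^ (((2*m : ℕ) : ℝ))).toReal = NP2.toReal ^ (2*m) := by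
      rw [← ENNReal.toReal_rpow, Real.rpow_natCast]
    rw [e₁, e₂, hc0def]
  -- final algebra
  set S : ℝ := ∑ k ∈ Finset.Icc 1 (2 * m + 1), (NP1.toReal ^ (k - 1) + NP2.toReal ^ (k - 1))
    with hS
  have hsub : ({1, 2*m+1} : Finset ℕ) ⊆ Finset.Icc 1 (2*m+1) := by
    intro x hx
    simp only [Finset.mem_insert, Finset.mem_singleton] at hx
    rcases hx with rfl | rfl <;> simp [Finset.mem_Icc] <;> omega
  have h12 : (1:ℕ) ∉ ({2*m+1} : Finset ℕ) := by simp; omega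
  have hSge : 2 + NP1.toReal ^ (2*m) + NP2.toReal ^ (2*m) ≤ S := by
    have h := Finset.sum_le_sum_of_subset_of_nonneg
      (f := fun k => NP1.toReal ^ (k - 1) + NP2.toReal ^ (k - 1)) hsub
      (fun k _ _ => by positivity)
    rw [Finset.sum_insert h12, Finset.sum_singleton] at h
    have e1 : (1:ℕ) - 1 = 0 := rfl
    have e2 : 2*m+1-1 = 2*m := by omega
    rw [e1, e2] at h
    simp only [pow_zero] at h
    linarith
  have hN2Δt0 : 0 ≤ N2Δ.toReal := ENNReal.toReal_nonneg
  have hNPzt0 : 0 ≤ NPz.toReal := ENNReal.toReal_nonneg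
  have ha0 : 0 ≤ NP1.toReal ^ (2*m) := by positivity
  have hb0 : 0 ≤ NP2.toReal ^ (2*m) := by positivity
  have base : c0 + NP1.toReal ^ (2*m) + NP2.toReal ^ (2*m) ≤ (c0 + 1) * S := by
    nlinarith [mul_nonneg hc00 (le_trans (by linarith) hSge)]
  calc |∫ ξ in O, f ξ| ≤ c * (N2Δ.toReal *
      (NPz.toReal * c0 + NP1.toReal ^ (2*m) * NPz.toReal + NP2.toReal ^ (2*m) * NPz.toReal)) :=
      treal
    _ = (((2*m+1 : ℕ):ℝ) * M * N2Δ.toReal * NPz.toReal) *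
        (c0 + NP1.toReal ^ (2*m) + NP2.toReal ^ (2*m)) := by rw [hc]; ring
    _ ≤ (((2*m+1 : ℕ):ℝ) * M * N2Δ.toReal * NPz.toReal) * ((c0 + 1) * S) := by
        refine mul_le_mul_of_nonneg_left base ?_
        have : (0:ℝ) ≤ ((2*m+1 : ℕ):ℝ) := Nat.cast_nonneg _
        exact mul_nonneg (mul_nonneg (mul_nonneg this hM0) hN2Δt0) hNPzt0
    _ = ((2*m+1 : ℕ):ℝ) * (c0 + 1) * M * N2Δ.toReal * NPz.toReal * S := by ring


/-- Weak sequential continuity estimate for the polynomial Nemytskii operator: there is a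
constant `K > 0` depending only on `m` and `|O|` such that
`|∫_O (b(t,ξ,y₁) − b(t,ξ,y₂)) z dξ| ≤ K (Σ_k sup|C_k|) ‖y₁−y₂‖_{L²} ‖z‖_{L^{2(2m+1)}}
  Σ_k (‖y₁‖^{k−1} + ‖y₂‖^{k−1})`; in particular, if `y_n` is bounded in `L^{2(2m+1)}(O)` and
`y_n → y` in `L²(O)`, then `∫_O (b(t,ξ,y_n) − b(t,ξ,y)) z dξ → 0`. -/
theorem polyReaction_weak_continuity
    (d m : ℕ) (hd : 1 ≤ d) (hm : 1 ≤ m) (T : ℝ) (hT : 0 < T)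
    (O : Set (EuclideanSpace ℝ (Fin d))) (hOopen : IsOpen O)
    (hObdd : Bornology.IsBounded O)
    (C : ℕ → ℝ → EuclideanSpace ℝ (Fin d) → ℝ)
    (hCcont : ∀ k ≤ 2 * m + 1,
      ContinuousOn (fun q : ℝ × EuclideanSpace ℝ (Fin d) => C k q.1 q.2)
        (Icc (0:ℝ) T ×ˢ closure O))
    (hCbdd : ∀ k ≤ 2 * m + 1, ∃ R : ℝ, ∀ t ∈ Icc (0:ℝ) T, ∀ ξ ∈ closure O, |C k t ξ| ≤ R) :
    (∃ K : ℝ, 0 < K ∧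
      ∀ t ∈ Icc (0:ℝ) T, ∀ y₁ y₂ z : EuclideanSpace ℝ (Fin d) → ℝ,
        MemLp y₁ ((2 * (2 * m + 1) : ℕ) : ℝ≥0∞) (volume.restrict O) →
        MemLp y₂ ((2 * (2 * m + 1) : ℕ) : ℝ≥0∞) (volume.restrict O) →
        MemLp z ((2 * (2 * m + 1) : ℕ) : ℝ≥0∞) (volume.restrict O) →
        |∫ ξ in O, (polyReaction d m C t ξ (y₁ ξ) - polyReaction d m C t ξ (y₂ ξ)) * z ξ| ≤
          K * (∑ k ∈ Finset.Icc 1 (2 * m + 1),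
              sSup {a : ℝ | ∃ t' ∈ Icc (0:ℝ) T, ∃ ξ' ∈ closure O, a = |C k t' ξ'|}) *
            (eLpNorm (fun ξ => y₁ ξ - y₂ ξ) 2 (volume.restrict O)).toReal *
            (eLpNorm z ((2 * (2 * m + 1) : ℕ) : ℝ≥0∞) (volume.restrict O)).toReal *
            ∑ k ∈ Finset.Icc 1 (2 * m + 1),
              ((eLpNorm y₁ ((2 * (2 * m + 1) : ℕ) : ℝ≥0∞) (volume.restrict O)).toReal ^ (k - 1) +
               (eLpNorm y₂ ((2 * (2 * m + 1) : ℕ) : ℝ≥0∞) (volume.restrict O)).toReal ^ (k - 1))) ∧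
    (∀ t ∈ Icc (0:ℝ) T, ∀ (yseq : ℕ → EuclideanSpace ℝ (Fin d) → ℝ)
        (y z : EuclideanSpace ℝ (Fin d) → ℝ),
      (∀ n : ℕ, MemLp (yseq n) ((2 * (2 * m + 1) : ℕ) : ℝ≥0∞) (volume.restrict O)) →
      MemLp y ((2 * (2 * m + 1) : ℕ) : ℝ≥0∞) (volume.restrict O) →
      MemLp z ((2 * (2 * m + 1) : ℕ) : ℝ≥0∞) (volume.restrict O) →
      (∃ R : ℝ, ∀ n : ℕ,
        (eLpNorm (yseq n) ((2 * (2 * m + 1) : ℕ) : ℝ≥0∞) (volume.restrict O)).toReal ≤ R) →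
      Tendsto (fun n : ℕ =>
        (eLpNorm (fun ξ => yseq n ξ - y ξ) 2 (volume.restrict O)).toReal) atTop (nhds 0) →
      Tendsto (fun n : ℕ =>
          ∫ ξ in O, (polyReaction d m C t ξ (yseq n ξ) - polyReaction d m C t ξ (y ξ)) * z ξ)
        atTop (nhds 0)) := by
  classical
  set Mk : ℕ → ℝ :=
    fun k => sSup {a : ℝ | ∃ t' ∈ Icc (0:ℝ) T, ∃ ξ' ∈ closure O, a = |C k t' ξ'|} with hMkdef
  have hMk0 : ∀ k, 0 ≤ Mk k := by
    intro k
    refine Real.sSup_nonneg ?_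
    rintro x ⟨t', _, ξ', _, rfl⟩
    exact abs_nonneg _
  have hMle : ∀ k, k ≤ 2*m+1 → ∀ t' ∈ Icc (0:ℝ) T, ∀ ξ' ∈ closure O, |C k t' ξ'| ≤ Mk k := by
    intro k hk t' ht' ξ' hξ'
    obtain ⟨R, hR⟩ := hCbdd k hk
    exact le_csSup ⟨R, by rintro x ⟨t'', ht'', ξ'', hξ'', rfl⟩; exact hR t'' ht'' ξ'' hξ''⟩
      ⟨t', ht', ξ', hξ', rfl⟩
  set K : ℝ := ((2*m+1 : ℕ) : ℝ) *
    (((volume.restrict O) Set.univ ^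
        (1/(2:ℝ≥0∞).toReal - 1/(((2 * (2 * m + 1) : ℕ) : ℝ≥0∞)).toReal)).toReal + 1) with hKdef
  have hKpos : 0 < K := by
    refine mul_pos ?_ (by positivity)
    exact_mod_cast Nat.cast_pos.2 (by omega : 0 < 2*m+1)
  have key : ∀ t ∈ Icc (0:ℝ) T, ∀ y₁ y₂ z : EuclideanSpace ℝ (Fin d) → ℝ,
      MemLp y₁ ((2 * (2 * m + 1) : ℕ) : ℝ≥0∞) (volume.restrict O) →
      MemLp y₂ ((2 * (2 * m + 1) : ℕ) : ℝ≥0∞) (volume.restrict O) →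
      MemLp z ((2 * (2 * m + 1) : ℕ) : ℝ≥0∞) (volume.restrict O) →
      |∫ ξ in O, (polyReaction d m C t ξ (y₁ ξ) - polyReaction d m C t ξ (y₂ ξ)) * z ξ| ≤
        K * (∑ k ∈ Finset.Icc 1 (2 * m + 1), Mk k) *
          (eLpNorm (fun ξ => y₁ ξ - y₂ ξ) 2 (volume.restrict O)).toReal *
          (eLpNorm z ((2 * (2 * m + 1) : ℕ) : ℝ≥0∞) (volume.restrict O)).toReal *
          ∑ k ∈ Finset.Icc 1 (2 * m + 1),
            ((eLpNorm y₁ ((2 * (2 * m + 1) : ℕ) : ℝ≥0∞) (volume.restrict O)).toReal ^ (k - 1) +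
             (eLpNorm y₂ ((2 * (2 * m + 1) : ℕ) : ℝ≥0∞) (volume.restrict O)).toReal ^ (k - 1)) := by
    intro t ht y₁ y₂ z h1 h2 h3
    have hpoly : ∀ ξ ∈ O, ∀ a b : ℝ,
        |polyReaction d m C t ξ a - polyReaction d m C t ξ b| ≤
          ((2 * m + 1 : ℕ) : ℝ) * (∑ k ∈ Finset.Icc 1 (2 * m + 1), Mk k) *
            (|a - b| * (1 + |a| ^ (2 * m) + |b| ^ (2 * m))) := fun ξ hξ a b =>
      myaux_poly_diff d m C t ξ Mk hMk0 (fun k hk => hMle k hk t ht ξ (subset_closure hξ)) a b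
    have h := key_estimate d m hm O hOopen hObdd (polyReaction d m C) Mk hMk0 t hpoly
      y₁ y₂ z h1 h2 h3
    refine h.trans (le_of_eq ?_)
    rw [hKdef]
  refine ⟨⟨K, hKpos, key⟩, ?_⟩
  intro t ht yseq y z hyseq hy hz hbdd htend
  obtain ⟨R, hR⟩ := hbdd
  set MS : ℝ := ∑ k ∈ Finset.Icc 1 (2 * m + 1), Mk k with hMS
  have hMS0 : 0 ≤ MS := Finset.sum_nonneg fun k _ => hMk0 k
  set NPzt : ℝ :=
    (eLpNorm z ((2 * (2 * m + 1) : ℕ) : ℝ≥0∞) (volume.restrict O)).toReal with hNPzt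
  set NPyt : ℝ :=
    (eLpNorm y ((2 * (2 * m + 1) : ℕ) : ℝ≥0∞) (volume.restrict O)).toReal with hNPyt
  set S' : ℝ := ∑ k ∈ Finset.Icc 1 (2 * m + 1), ((max R 0) ^ (k - 1) + NPyt ^ (k - 1)) with hS'
  have hC0 : 0 ≤ K * MS * NPzt :=
    mul_nonneg (mul_nonneg hKpos.le hMS0) ENNReal.toReal_nonneg
  refine squeeze_zero_norm (a := fun n =>
    (K * MS * NPzt * S') *
      (eLpNorm (fun ξ => yseq n ξ - y ξ) 2 (volume.restrict O)).toReal) ?_ ?_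
  · intro n
    have h := key t ht (yseq n) y z (hyseq n) hy hz
    rw [Real.norm_eq_abs]
    refine h.trans ?_
    have hSn : (∑ k ∈ Finset.Icc 1 (2 * m + 1),
        ((eLpNorm (yseq n) ((2 * (2 * m + 1) : ℕ) : ℝ≥0∞) (volume.restrict O)).toReal ^ (k - 1) +
         NPyt ^ (k - 1))) ≤ S' := by
      refine Finset.sum_le_sum fun k _ => add_le_add ?_ le_rfl
      exact pow_le_pow_left₀ ENNReal.toReal_nonneg ((hR n).trans (le_max_left R 0)) _
    set Dn : ℝ := (eLpNorm (fun ξ => yseq n ξ - y ξ) 2 (volume.restrict O)).toReal with hDn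
    have hDn0 : 0 ≤ Dn := ENNReal.toReal_nonneg
    calc K * MS * Dn * NPzt * (∑ k ∈ Finset.Icc 1 (2 * m + 1),
          ((eLpNorm (yseq n) ((2 * (2 * m + 1) : ℕ) : ℝ≥0∞) (volume.restrict O)).toReal ^ (k - 1)
            + NPyt ^ (k - 1)))
        = ((K * MS * NPzt) * (∑ k ∈ Finset.Icc 1 (2 * m + 1),
            ((eLpNorm (yseq n) ((2 * (2 * m + 1) : ℕ) : ℝ≥0∞) (volume.restrict O)).toReal
              ^ (k - 1) + NPyt ^ (k - 1)))) * Dn := by ring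
      _ ≤ ((K * MS * NPzt) * S') * Dn :=
          mul_le_mul_of_nonneg_right (mul_le_mul_of_nonneg_left hSn hC0) hDn0
      _ = (K * MS * NPzt * S') * Dn := by ring
  · have h := htend.const_mul (K * MS * NPzt * S')
    simpa using h
end
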